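/- arXiv:1506.03119 — 11 statements merged into one kernel-verified Lean document; each statement's English description precedes it below -/
import Mathlib

section
/- If A → B, A → C are injective functions of finite sets, then the canonical map from A to the pullback B ×_D C of the pushout square (where D = B ⊔_A C) given by a ↦ (u(a), v(a)) is a bijection. -/
open scoped Classical

/-- The relation generating the pushout of a span `A ← k → B` of (finite) sets. -/
def PRel {k A B : Type} (f : k → A) (g : k → B) : A ⊕ B → A ⊕ B → Prop :=
  fun x y => ∃ z, x = Sum.inl (f z) ∧ y = Sum.inr (g z)

/-- The pushout of the span `A ← k → B`. -/
def Pushout {k A B : Type} (f : k → A) (g : k → B) : Type :=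
  Quot (PRel f g)

/-- Canonical map `ι_A : A → A ⊔_k B`. -/
def pInl {k A B : Type} (f : k → A) (g : k → B) (a : A) : Pushout f g :=
  Quot.mk _ (Sum.inl a)

/-- Canonical map `ι_B : B → A ⊔_k B`. -/
def pInr {k A B : Type} (f : k → A) (g : k → B) (b : B) : Pushout f g :=
  Quot.mk _ (Sum.inr b)

instance {k A B : Type} (f : k → A) (g : k → B) [Finite A] [Finite B] :
    Finite (Pushout f g) :=
  Quot.finite _

noncomputable instance {k A B : Type} (f : k → A) (g : k → B) [Fintype A] [Fintype B] :
    Fintype (Pushout f g) :=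
  Fintype.ofFinite _

/-- The genus formula of Definition 3.4:
`g(x) = 1 + Σ_{ι_A(a)=x}(g₁(a)−1) + Σ_{ι_B(b)=x}(g₂(b)−1) + #{y ∈ k : y ↦ x}`. -/
noncomputable def compGenus {k A B : Type} [Fintype k] [Fintype A] [Fintype B]
    (f : k → A) (g : k → B) (g1 : A → ℤ) (g2 : B → ℤ) (x : Pushout f g) : ℤ :=
  1 + (∑ a ∈ Finset.univ.filter (fun a => pInl f g a = x), (g1 a - 1))
    + (∑ b ∈ Finset.univ.filter (fun b => pInr f g b = x), (g2 b - 1))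
    + ((Finset.univ.filter (fun y : k => pInl f g (f y) = x)).card : ℤ)

/-- A combinatorial 2-cobordism from the finite set `m` to the finite set `n`. -/
structure Cob (m n : Type) : Type 1 where
  C : Type
  [fin : Fintype C]
  lm : m → C
  ln : n → C
  g : C → ℕ

attribute [instance] Cob.fin

/-- Composition of combinatorial 2-cobordisms via pushout of component sets
and the genus formula of Definition 3.4. -/
noncomputable def Cob.comp {m k n : Type} [Fintype k] (ψ : Cob k n) (φ : Cob m k) :
    Cob m n where
  C := Pushout φ.ln ψ.lm
  lm := fun x => pInl φ.ln ψ.lm (φ.lm x)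
  ln := fun y => pInr φ.ln ψ.lm (ψ.ln y)
  g := fun x =>
    (compGenus φ.ln ψ.lm (fun a => (φ.g a : ℤ)) (fun b => (ψ.g b : ℤ)) x).toNat

/-- Equivalence of combinatorial 2-cobordisms: a bijection of component sets
intertwining the structure maps and the genus functions. -/
def Cob.Equiv {m n : Type} (φ φ' : Cob m n) : Prop :=
  ∃ χ : φ.C ≃ φ'.C,
    (∀ x, χ (φ.lm x) = φ'.lm x) ∧ (∀ y, χ (φ.ln y) = φ'.ln y) ∧
    (∀ c, φ'.g (χ c) = φ.g c)

/-- A cofibration: `l_n` is injective and `l_n` lifts through `l_m`. -/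
def Cob.IsCofib {m n : Type} (φ : Cob m n) : Prop :=
  Function.Injective φ.ln ∧ ∃ u : n → m, ∀ y, φ.lm (u y) = φ.ln y

/-- A fibration: `l_m` is injective, `l_n` is surjective, and `g ∘ l_m = 0`. -/
def Cob.IsFib {m n : Type} (φ : Cob m n) : Prop :=
  Function.Injective φ.lm ∧ Function.Surjective φ.ln ∧ ∀ x, φ.g (φ.lm x) = 0

/-- The five local conditions of Definition 5.2.1 defining an oriented 1-cobordism
between signed finite sets (signs recorded by Boolean functions, `true` = `+`). -/
def IsOriented {m n C : Type} (sm : m → Bool) (sn : n → Bool)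
    (lm : m → C) (ln : n → C) : Prop :=
  ∀ c : C,
    (∃ a b : m, sm a = true ∧ sm b = false ∧ a ≠ b ∧
      (∀ x, lm x = c ↔ (x = a ∨ x = b)) ∧ (∀ y, ln y ≠ c)) ∨
    (∃ a b : n, sn a = true ∧ sn b = false ∧ a ≠ b ∧
      (∀ y, ln y = c ↔ (y = a ∨ y = b)) ∧ (∀ x, lm x ≠ c)) ∨
    (∃ a : m, ∃ b : n, sm a = sn b ∧
      (∀ x, lm x = c ↔ x = a) ∧ (∀ y, ln y = c ↔ y = b)) ∨
    ((∀ x, lm x ≠ c) ∧ (∀ y, ln y ≠ c))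

/-- The saturation of `PRel` when both maps are injective. -/
def SRel {A B C : Type} (u : A → B) (v : A → C) : B ⊕ C → B ⊕ C → Prop :=
  fun x y => x = y ∨ (∃ a, x = Sum.inl (u a) ∧ y = Sum.inr (v a)) ∨
    (∃ a, x = Sum.inr (v a) ∧ y = Sum.inl (u a))

theorem srel_of_eqvgen {A B C : Type} (u : A → B) (v : A → C)
    (hu : Function.Injective u) (hv : Function.Injective v)
    {x y : B ⊕ C} (h : Relation.EqvGen (PRel u v) x y) : SRel u v x y := by
  induction h with
  | rel x y h => exact Or.inr (Or.inl h)
  | refl x => exact Or.inl rfl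
  | symm x y _ ih =>
    rcases ih with rfl | ⟨a, rfl, rfl⟩ | ⟨a, rfl, rfl⟩
    · exact Or.inl rfl
    · exact Or.inr (Or.inr ⟨a, rfl, rfl⟩)
    · exact Or.inr (Or.inl ⟨a, rfl, rfl⟩)
  | trans x y z _ _ ih1 ih2 =>
    rcases ih1 with rfl | ⟨a, rfl, rfl⟩ | ⟨a, rfl, rfl⟩
    · exact ih2
    · rcases ih2 with rfl | ⟨a', h1, h2⟩ | ⟨a', h1, rfl⟩
      · exact Or.inr (Or.inl ⟨a, rfl, rfl⟩)
      · exact absurd h1 (by simp)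
      · obtain rfl : a = a' := hv (Sum.inr.inj h1)
        exact Or.inl rfl
    · rcases ih2 with rfl | ⟨a', h1, rfl⟩ | ⟨a', h1, h2⟩
      · exact Or.inr (Or.inr ⟨a, rfl, rfl⟩)
      · obtain rfl : a = a' := hu (Sum.inl.inj h1)
        exact Or.inl rfl
      · exact absurd h1 (by simp)

/-- for injections `u : A → B`, `v : A → C` of finite sets, the canonical
map from `A` to the pullback of the pushout square is a bijection. -/
theorem stmt_1 {A B C : Type} [Finite A] [Finite B] [Finite C]
    (u : A → B) (v : A → C) (hu : Function.Injective u) (hv : Function.Injective v) :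
    Function.Bijective (fun a : A =>
      (⟨(u a, v a), by exact Quot.sound ⟨a, rfl, rfl⟩⟩ :
        {p : B × C // pInl u v p.1 = pInr u v p.2})) := by
  constructor
  · intro a a' h
    exact hu (congrArg (fun p => p.1.1) h)
  · rintro ⟨⟨b, c⟩, h⟩
    have h' : Relation.EqvGen (PRel u v) (Sum.inl b) (Sum.inr c) := Quot.eq.mp h
    rcases srel_of_eqvgen u v hu hv h' with heq | ⟨a, h1, h2⟩ | ⟨a, h1, h2⟩
    · exact absurd heq (by simp)
    · exact ⟨a, by simp [Sum.inl.inj h1.symm, Sum.inr.inj h2.symm]⟩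
    · exact absurd h1 (by simp)
end

section
/- The composition of cobordisms in the combinatorial model of 2-Cob is associative: given cobordisms φ: W → X, ψ: X → Y, χ: Y → Z represented by component sets A, B, C with genus functions g₁, g₂, g₃, the component set and genus function of χ∘(ψ∘φ) agree (up to canonical isomorphism of iterated pushouts) with those of (χ∘ψ)∘φ. -/
/-!
The two iterated pushouts `(A ⊔_X B) ⊔_Y C` and `A ⊔_X (B ⊔_Y C)` are canonically isomorphic,
and under this isomorphism both iterated genus formulas expand to
`1 + Σ_a (g₁ a - 1) + Σ_b (g₂ b - 1) + Σ_c (g₃ c - 1) + #(X-fibre) + #(Y-fibre)`.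
The only subtlety is the truncation `Int.toNat` in `Cob.comp`. It is harmless because the genus
formula is nonnegative: the elements of `A ⊕ B` over a point `x` of the pushout are the vertices
of a connected graph whose edges are the points of `k` over `x`, so there are at most one more
of them than there are such points.
-/

open scoped Classical

open Finset

namespace Pushout

variable {k A B : Type} {f : k → A} {g : k → B}

theorem condition (z : k) : pInl f g (f z) = pInr f g (g z) :=
  Quot.sound ⟨z, rfl, rfl⟩

@[elab_as_elim]
theorem ind {motive : Pushout f g → Prop} (inl : ∀ a, motive (pInl f g a))
    (inr : ∀ b, motive (pInr f g b)) (x : Pushout f g) : motive x :=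
  Quot.ind (Sum.rec inl inr) x

def desc {P : Type} (u : A → P) (v : B → P) (h : ∀ z, u (f z) = v (g z)) :
    Pushout f g → P :=
  Quot.lift (Sum.elim u v) (by rintro _ _ ⟨z, rfl, rfl⟩; exact h z)

section Genus

variable (f g) in
def gluingGraph : SimpleGraph (A ⊕ B) :=
  SimpleGraph.fromRel (PRel f g)

theorem quot_mk_eq_iff_reachable {v w : A ⊕ B} :
    Quot.mk (PRel f g) v = Quot.mk (PRel f g) w ↔ (gluingGraph f g).Reachable v w := by
  constructor
  · intro h
    replace h := Quot.eqvGen_exact h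
    induction h with
    | rel v w hvw =>
      obtain ⟨z, rfl, rfl⟩ := hvw
      exact SimpleGraph.Adj.reachable ⟨Sum.inl_ne_inr, Or.inl ⟨z, rfl, rfl⟩⟩
    | refl => rfl
    | symm _ _ _ ih => exact ih.symm
    | trans _ _ _ _ _ ih₁ ih₂ => exact ih₁.trans ih₂
  · intro h
    rw [SimpleGraph.reachable_iff_reflTransGen] at h
    induction h with
    | refl => rfl
    | tail _ hadj ih =>
      obtain ⟨-, hadj | hadj⟩ := hadj
      exacts [ih.trans (Quot.sound hadj), ih.trans (Quot.sound hadj).symm]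

theorem mem_supp_connectedComponentMk_iff {r v : A ⊕ B} :
    v ∈ ((gluingGraph f g).connectedComponentMk r).supp ↔
      Quot.mk (PRel f g) v = Quot.mk (PRel f g) r := by
  rw [SimpleGraph.ConnectedComponent.mem_supp_iff, SimpleGraph.ConnectedComponent.eq,
    quot_mk_eq_iff_reachable]

variable [Fintype k] [Fintype A] [Fintype B]

theorem card_fibers_le (x : Pushout f g) :
    #{a | pInl f g a = x} + #{b | pInr f g b = x} ≤ #{z | pInl f g (f z) = x} + 1 := by
  obtain ⟨r, rfl⟩ := Quot.exists_rep x
  set C := (gluingGraph f g).connectedComponentMk r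
  have card_supp : Nat.card C.supp =
      #{a | pInl f g a = Quot.mk _ r} + #{b | pInr f g b = Quot.mk _ r} := by
    rw [Nat.card_congr ((Equiv.subtypeEquivRight fun _ => mem_supp_connectedComponentMk_iff).trans
        Equiv.subtypeSum), Nat.card_sum, Nat.card_eq_fintype_card, Fintype.card_subtype,
      Nat.card_eq_fintype_card, Fintype.card_subtype]
    rfl
  have card_edges : Nat.card C.toSimpleGraph.edgeSet ≤ #{z | pInl f g (f z) = Quot.mk _ r} := by
    rw [← Fintype.card_subtype, ← Nat.card_eq_fintype_card]
    refine Nat.card_le_card_of_surjective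
      (fun z => ⟨s(⟨Sum.inl (f z.1), mem_supp_connectedComponentMk_iff.2 z.2⟩,
        ⟨Sum.inr (g z.1), mem_supp_connectedComponentMk_iff.2 ((condition z.1).symm.trans z.2)⟩),
        ⟨Sum.inl_ne_inr, Or.inl ⟨z.1, rfl, rfl⟩⟩⟩) ?_
    rintro ⟨e, he⟩
    induction e using Sym2.ind with
    | _ u v =>
      obtain ⟨-, ⟨z, hu, hv⟩ | ⟨z, hv, hu⟩⟩ := he <;>
        change (u : A ⊕ B) = _ at hu <;> change (v : A ⊕ B) = _ at hv
      · refine ⟨⟨z, mem_supp_connectedComponentMk_iff.1 (hu ▸ u.2)⟩, Subtype.ext ?_⟩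
        simp [Subtype.ext_iff, hu, hv]
      · refine ⟨⟨z, mem_supp_connectedComponentMk_iff.1 (hv ▸ v.2)⟩, Subtype.ext ?_⟩
        simp [Subtype.ext_iff, hu, hv]
  calc _ = Nat.card C.supp := card_supp.symm
    _ ≤ Nat.card C.toSimpleGraph.edgeSet + 1 :=
      C.connected_toSimpleGraph.card_vert_le_card_edgeSet_add_one
    _ ≤ _ := Nat.add_le_add_right card_edges 1

theorem compGenus_nonneg {g₁ : A → ℤ} {g₂ : B → ℤ} (h₁ : ∀ a, 0 ≤ g₁ a) (h₂ : ∀ b, 0 ≤ g₂ b)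
    (x : Pushout f g) : 0 ≤ compGenus f g g₁ g₂ x := by
  have hA : #{a | pInl f g a = x} • (-1 : ℤ) ≤ ∑ a ∈ {a | pInl f g a = x}, (g₁ a - 1) :=
    card_nsmul_le_sum _ _ _ fun a _ => by linarith [h₁ a]
  have hB : #{b | pInr f g b = x} • (-1 : ℤ) ≤ ∑ b ∈ {b | pInr f g b = x}, (g₂ b - 1) :=
    card_nsmul_le_sum _ _ _ fun b _ => by linarith [h₂ b]
  have hcard : (#{a | pInl f g a = x} + #{b | pInr f g b = x} : ℤ) ≤
      #{z | pInl f g (f z) = x} + 1 :=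
    mod_cast card_fibers_le x
  simp only [smul_neg, nsmul_eq_mul, mul_one] at hA hB
  unfold compGenus
  linarith

theorem sum_fiber_compGenus_sub_one {Q : Type} (q : Pushout f g → Q) (x : Q)
    (g₁ : A → ℤ) (g₂ : B → ℤ) :
    ∑ p ∈ {p | q p = x}, (compGenus f g g₁ g₂ p - 1) =
      ∑ a ∈ {a | q (pInl f g a) = x}, (g₁ a - 1) + ∑ b ∈ {b | q (pInr f g b) = x}, (g₂ b - 1)
        + #{z | q (pInl f g (f z)) = x} := by
  have expand (p : Pushout f g) : compGenus f g g₁ g₂ p - 1 =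
      ∑ a ∈ {a | pInl f g a = p}, (g₁ a - 1) + ∑ b ∈ {b | pInr f g b = p}, (g₂ b - 1)
        + ∑ z ∈ {z | pInl f g (f z) = p}, 1 := by
    rw [compGenus, card_eq_sum_ones, Nat.cast_sum, Nat.cast_one]
    ring
  simp only [expand, sum_add_distrib]
  rw [sum_fiberwise_eq_sum_filter _ _ (pInl f g), sum_fiberwise_eq_sum_filter _ _ (pInr f g),
    sum_fiberwise_eq_sum_filter _ _ (fun z => pInl f g (f z)), card_eq_sum_ones, Nat.cast_sum,
    Nat.cast_one]
  simp only [mem_filter, mem_univ, true_and]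

end Genus

section Assoc

variable {X Y A B C : Type} (f₁ : X → A) (f₂ : X → B) (f₃ : Y → B) (f₄ : Y → C)

def assocEquiv :
    Pushout (fun y => pInr f₁ f₂ (f₃ y)) f₄ ≃ Pushout f₁ (fun x => pInl f₃ f₄ (f₂ x)) where
  toFun := desc (desc (pInl _ _) (fun b => pInr _ _ (pInl f₃ f₄ b)) condition)
    (fun c => pInr _ _ (pInr f₃ f₄ c)) fun y => congrArg (pInr _ _) (condition y)
  invFun := desc (fun a => pInl _ _ (pInl f₁ f₂ a))
    (desc (fun b => pInl _ _ (pInr f₁ f₂ b)) (pInr _ _) condition)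
    fun x => congrArg (pInl _ _) (condition x)
  left_inv := ind (ind (fun _ => rfl) fun _ => rfl) fun _ => rfl
  right_inv := ind (fun _ => rfl) (ind (fun _ => rfl) fun _ => rfl)

variable {f₁ f₂ f₃ f₄}

@[simp]
theorem assocEquiv_pInl_pInl (a : A) :
    assocEquiv f₁ f₂ f₃ f₄ (pInl _ _ (pInl f₁ f₂ a)) = pInl _ _ a := rfl

@[simp]
theorem assocEquiv_pInl_pInr (b : B) :
    assocEquiv f₁ f₂ f₃ f₄ (pInl _ _ (pInr f₁ f₂ b)) = pInr _ _ (pInl f₃ f₄ b) := rfl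

@[simp]
theorem assocEquiv_pInr (c : C) :
    assocEquiv f₁ f₂ f₃ f₄ (pInr _ _ c) = pInr _ _ (pInr f₃ f₄ c) := rfl

variable [Fintype X] [Fintype Y] [Fintype A] [Fintype B] [Fintype C]

theorem compGenus_assoc (g₁ : A → ℤ) (g₂ : B → ℤ) (g₃ : C → ℤ)
    (x : Pushout (fun y => pInr f₁ f₂ (f₃ y)) f₄) :
    compGenus f₁ (fun x => pInl f₃ f₄ (f₂ x)) g₁ (compGenus f₃ f₄ g₂ g₃)
        (assocEquiv f₁ f₂ f₃ f₄ x) =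
      compGenus (fun y => pInr f₁ f₂ (f₃ y)) f₄ (compGenus f₁ f₂ g₁ g₂) g₃ x := by
  rw [compGenus, compGenus, sum_fiber_compGenus_sub_one, sum_fiber_compGenus_sub_one]
  simp only [← assocEquiv_pInl_pInl, ← assocEquiv_pInl_pInr, ← assocEquiv_pInr,
    (assocEquiv f₁ f₂ f₃ f₄).apply_eq_iff_eq]
  ring

end Assoc

end Pushout

theorem Cob.natCast_comp_g {m k n : Type} [Fintype k] (ψ : Cob k n) (φ : Cob m k)
    (x : (ψ.comp φ).C) :
    ((ψ.comp φ).g x : ℤ) = compGenus φ.ln ψ.lm (fun a => (φ.g a : ℤ)) (fun b => (ψ.g b : ℤ)) x :=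
  Int.toNat_of_nonneg <|
    Pushout.compGenus_nonneg (fun _ => Int.natCast_nonneg _) (fun _ => Int.natCast_nonneg _) x

/-- Proposition 3.5: composition of combinatorial 2-cobordisms is
associative, up to the canonical identification of iterated pushouts, including the
genus functions. -/
theorem stmt_3 {W X Y Z : Type} [Fintype X] [Fintype Y]
    (φ : Cob W X) (ψ : Cob X Y) (χ : Cob Y Z) :
    Cob.Equiv (Cob.comp χ (Cob.comp ψ φ)) (Cob.comp (Cob.comp χ ψ) φ) := by
  refine ⟨Pushout.assocEquiv φ.ln ψ.lm ψ.ln χ.lm, fun _ => rfl, fun _ => rfl, fun c => ?_⟩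
  apply Nat.cast_injective (R := ℤ)
  simp only [Cob.natCast_comp_g]
  exact Pushout.compGenus_assoc _ _ _ c
end

section
/- In the composition of two combinatorial 2-cobordisms, if both are fibrations, then the composite is a fibration: the map from m into the composite component set is injective, the map from n is surjective, the composite genus function vanishes on the image of m, and the composite has no closed surfaces. -/
open scoped Classical

section Aux

variable {k A B : Type} {f : k → A} {g : k → B}

/-- The explicit equivalence relation on `A ⊕ B` generated by `PRel f g`,
valid when `g` is injective. -/
def Rr (f : k → A) (g : k → B) : A ⊕ B → A ⊕ B → Prop :=
  fun x y => match x, y with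
  | .inl a, .inl a' => a = a'
  | .inl a, .inr b => ∃ z, f z = a ∧ g z = b
  | .inr b, .inl a => ∃ z, f z = a ∧ g z = b
  | .inr b, .inr b' => b = b' ∨ ∃ z z', g z = b ∧ g z' = b' ∧ f z = f z'

theorem eqvGen_to_Rr (hg : Function.Injective g) {x y : A ⊕ B}
    (h : Relation.EqvGen (PRel f g) x y) : Rr f g x y := by
  induction h with
  | rel x y h =>
    obtain ⟨z, hx, hy⟩ := h
    subst hx; subst hy
    exact ⟨z, rfl, rfl⟩
  | refl x => cases x with
    | inl a => exact rfl
    | inr b => exact Or.inl rfl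
  | symm x y _ ih =>
    cases x with
    | inl a => cases y with
      | inl a' => exact ih.symm
      | inr b => exact ih
    | inr b => cases y with
      | inl a' => exact ih
      | inr b' =>
        rcases ih with h | ⟨z, z', h1, h2, h3⟩
        · exact Or.inl h.symm
        · exact Or.inr ⟨z', z, h2, h1, h3.symm⟩
  | trans x y w _ _ ih1 ih2 =>
    cases x with
    | inl a =>
      cases y with
      | inl a' => cases w with
        | inl a'' => exact ih1.trans ih2
        | inr b => subst ih1; exact ih2
      | inr b => cases w with
        | inl a'' =>
          obtain ⟨z, hz1, hz2⟩ := ih1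
          obtain ⟨z', hz1', hz2'⟩ := ih2
          have : z = z' := hg (hz2.trans hz2'.symm)
          subst this
          exact hz1.symm.trans hz1'
        | inr b' =>
          obtain ⟨z, hz1, hz2⟩ := ih1
          rcases ih2 with h | ⟨u, u', h1, h2, h3⟩
          · exact ⟨z, hz1, hz2.trans h⟩
          · have : z = u := hg (hz2.trans h1.symm)
            subst this
            exact ⟨u', h3 ▸ hz1, h2⟩
    | inr b =>
      cases y with
      | inl a' => cases w with
        | inl a'' => exact ih2 ▸ ih1
        | inr b' =>
          obtain ⟨z, hz1, hz2⟩ := ih1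
          obtain ⟨z', hz1', hz2'⟩ := ih2
          exact Or.inr ⟨z, z', hz2, hz2', hz1.trans hz1'.symm⟩
      | inr b' => cases w with
        | inl a'' =>
          rcases ih1 with h | ⟨u, u', h1, h2, h3⟩
          · exact h ▸ ih2
          · obtain ⟨z, hz1, hz2⟩ := ih2
            have : u' = z := hg (h2.trans hz2.symm)
            subst this
            exact ⟨u, h3.symm ▸ hz1, h1⟩
        | inr b'' =>
          rcases ih1 with h | ⟨u, u', h1, h2, h3⟩
          · exact h ▸ ih2
          · rcases ih2 with h' | ⟨v, v', h1', h2', h3'⟩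
            · exact Or.inr ⟨u, u', h1, h' ▸ h2, h3⟩
            · have : u' = v := hg (h2.trans h1'.symm)
              subst this
              exact Or.inr ⟨u, v', h1, h2', h3.trans h3'⟩

theorem pInl_inj (hg : Function.Injective g) {a a' : A}
    (h : pInl f g a = pInl f g a') : a = a' :=
  eqvGen_to_Rr hg (Quot.eq.mp h)

theorem pInr_eq_pInl (hg : Function.Injective g) {a : A} {b : B} :
    pInr f g b = pInl f g a ↔ ∃ z, f z = a ∧ g z = b := by
  constructor
  · intro h
    exact eqvGen_to_Rr hg (Quot.eq.mp h)
  · rintro ⟨z, rfl, rfl⟩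
    exact (Quot.sound ⟨z, rfl, rfl⟩).symm

end Aux

/-- Proposition 3.6: the composite of two fibrations is a fibration,
and moreover the composite has no closed surfaces. -/
theorem stmt_4 {m k n : Type} [Fintype k] (φ : Cob m k) (ψ : Cob k n)
    (hφ : φ.IsFib) (hψ : ψ.IsFib) :
    (Cob.comp ψ φ).IsFib ∧
      ∀ x : (Cob.comp ψ φ).C,
        (∃ a, (Cob.comp ψ φ).lm a = x) ∨ ∃ b, (Cob.comp ψ φ).ln b = x := by
  obtain ⟨hφi, hφs, hφg⟩ := hφ
  obtain ⟨hψi, hψs, hψg⟩ := hψ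
  have hsurj : Function.Surjective (Cob.comp ψ φ).ln := by
    intro x
    induction x using Quot.ind with
    | _ s =>
      cases s with
      | inl a =>
        obtain ⟨z, hz⟩ := hφs a
        obtain ⟨y, hy⟩ := hψs (ψ.lm z)
        refine ⟨y, ?_⟩
        show pInr φ.ln ψ.lm (ψ.ln y) = _
        rw [hy]
        exact (Quot.sound ⟨z, by rw [hz], rfl⟩).symm
      | inr b =>
        obtain ⟨y, hy⟩ := hψs b
        exact ⟨y, by show pInr φ.ln ψ.lm (ψ.ln y) = _; rw [hy]; rfl⟩
  refine ⟨⟨?_, hsurj, ?_⟩, fun x => Or.inr (hsurj x)⟩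
  · intro a a' h
    exact hφi (pInl_inj hψi h)
  · intro a0
    show (compGenus φ.ln ψ.lm _ _ (pInl φ.ln ψ.lm (φ.lm a0))).toNat = 0
    set x := pInl φ.ln ψ.lm (φ.lm a0) with hx
    set S : Finset k := Finset.univ.filter (fun y => φ.ln y = φ.lm a0) with hS
    have e1 : Finset.univ.filter (fun a => pInl φ.ln ψ.lm a = x) = {φ.lm a0} := by
      ext a
      simp only [Finset.mem_filter, Finset.mem_univ, true_and, Finset.mem_singleton, hx]
      exact ⟨fun h => pInl_inj hψi h, fun h => by rw [h]⟩
    have e2 : Finset.univ.filter (fun b => pInr φ.ln ψ.lm b = x) = S.image ψ.lm := by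
      ext b
      simp only [Finset.mem_filter, Finset.mem_univ, true_and, Finset.mem_image, hx, hS,
        pInr_eq_pInl hψi]
    have e3 : Finset.univ.filter (fun y : k => pInl φ.ln ψ.lm (φ.ln y) = x) = S := by
      ext y
      simp only [Finset.mem_filter, Finset.mem_univ, true_and, hS, hx]
      exact ⟨fun h => pInl_inj hψi h, fun h => by rw [h]⟩
    rw [compGenus, e1, e2, e3]
    rw [Finset.sum_singleton, Finset.sum_image (fun y _ y' _ h => hψi h)]
    have : ∀ y ∈ S, ((ψ.g (ψ.lm y) : ℤ) - 1) = -1 := by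
      intro y _
      rw [hψg]
      norm_num
    rw [Finset.sum_congr rfl this, Finset.sum_const, hφg a0]
    simp
end

section
/- Every combinatorial 2-cobordism factors as a cofibration followed by a fibration: given (C, l_m: m → C, l_n: n → C, g), setting B = im(l_n), A = im(l_m) ∪ (C \ im(l_n)), and k = the pullback (intersection) im(l_m) ∩ im(l_n), with genus functions the restrictions of g adjusted so that the fibration has genus zero on its source, the composite of the resulting cofibration m → k and fibration k → n equals the original cobordism. -/
open scoped Classical

/-! The component sets `A = im l_m ∪ (C \ im l_n)` and `B = im l_n` cover `C` and meet in
`K = im l_m ∩ im l_n`, so the pushout of `A ← K → B` along the subset inclusions is `C` again.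
At a component `c` the genus formula is `1 + [c ∈ A] (g c - 1) + [c ∈ B] (g_B c - 1) + [c ∈ K]`;
as the fibration factor has `g_B = 0` on `K` and `g_B = g` elsewhere, each case gives `g c`. -/

lemma Finset.sum_filter_subtype_val_eq {C M : Type} [AddCommMonoid M] {P : C → Prop}
    [DecidablePred P] [Fintype {c // P c}] (F : C → M) (c : C) :
    ∑ a ∈ Finset.univ.filter (fun a : {c // P c} => a.1 = c), F a.1 =
      if P c then F c else 0 := by
  split_ifs with h
  · rw [show Finset.univ.filter (fun a : {c // P c} => a.1 = c) = {⟨c, h⟩} by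
      ext; simp [Subtype.ext_iff]]
    simp
  · rw [Finset.filter_false_of_mem (by rintro ⟨a, ha⟩ - rfl; exact h ha), Finset.sum_empty]

lemma Finset.card_filter_subtype_val_eq {C : Type} {P : C → Prop} [DecidablePred P]
    [Fintype {c // P c}] (c : C) :
    ((Finset.univ.filter (fun a : {c // P c} => a.1 = c)).card : ℤ) = if P c then 1 else 0 := by
  rw [Finset.card_eq_sum_ones, Nat.cast_sum,
    Finset.sum_filter_subtype_val_eq (fun _ => ((1 : ℕ) : ℤ))]
  simp

def Pushout.desc_s6 {k A B X : Type} {f : k → A} {g : k → B} (u : A → X) (v : B → X)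
    (h : ∀ z, u (f z) = v (g z)) : Pushout f g → X :=
  Quot.lift (Sum.elim u v) (by rintro _ _ ⟨z, rfl, rfl⟩; exact h z)

namespace Pushout

section Subtypes

variable {C : Type} {K A B : C → Prop} (hKA : ∀ c, K c → A c) (hKB : ∀ c, K c → B c)

def val : Pushout (Subtype.map id hKA) (Subtype.map id hKB) → C :=
  desc_s6 Subtype.val Subtype.val fun _ => rfl

variable {hKA hKB} (hK : ∀ c, A c → B c → K c)
include hK

theorem pInl_eq_pInr_of_val_eq {a : {c // A c}} {b : {c // B c}} (h : a.1 = b.1) :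
    pInl (Subtype.map id hKA) (Subtype.map id hKB) a = pInr _ _ b :=
  Quot.sound ⟨⟨a.1, hK _ a.2 (h ▸ b.2)⟩, rfl, congrArg Sum.inr (Subtype.ext h.symm)⟩

theorem pInl_eq_iff (a : {c // A c}) (x : Pushout (Subtype.map id hKA) (Subtype.map id hKB)) :
    pInl _ _ a = x ↔ a.1 = val hKA hKB x := by
  refine ⟨by rintro rfl; rfl, fun h => ?_⟩
  obtain ⟨a' | b, rfl⟩ := Quot.exists_rep x
  · exact congrArg (pInl _ _) (Subtype.ext h)
  · exact pInl_eq_pInr_of_val_eq hK h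

theorem pInr_eq_iff (b : {c // B c}) (x : Pushout (Subtype.map id hKA) (Subtype.map id hKB)) :
    pInr _ _ b = x ↔ b.1 = val hKA hKB x := by
  refine ⟨by rintro rfl; rfl, fun h => ?_⟩
  obtain ⟨a | b', rfl⟩ := Quot.exists_rep x
  · exact (pInl_eq_pInr_of_val_eq hK h.symm).symm
  · exact congrArg (pInr _ _) (Subtype.ext h)

theorem val_injective : Function.Injective (val hKA hKB) := by
  intro x y h
  obtain ⟨a | b, rfl⟩ := Quot.exists_rep x
  · exact (pInl_eq_iff hK a _).2 h
  · exact (pInr_eq_iff hK b _).2 h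

omit hK in
theorem val_surjective (hAB : ∀ c, A c ∨ B c) : Function.Surjective (val hKA hKB) := fun c =>
  (hAB c).elim (fun h => ⟨pInl _ _ ⟨c, h⟩, rfl⟩) (fun h => ⟨pInr _ _ ⟨c, h⟩, rfl⟩)

theorem compGenus_eq [DecidablePred K] [DecidablePred A] [DecidablePred B]
    [Fintype {c // K c}] [Fintype {c // A c}] [Fintype {c // B c}]
    (G₁ G₂ : C → ℤ) (x : Pushout (Subtype.map id hKA) (Subtype.map id hKB)) :
    compGenus _ _ (fun a => G₁ a.1) (fun b => G₂ b.1) x =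
      1 + (if A (val hKA hKB x) then G₁ (val hKA hKB x) - 1 else 0)
        + (if B (val hKA hKB x) then G₂ (val hKA hKB x) - 1 else 0)
        + (if K (val hKA hKB x) then 1 else 0) := by
  simp only [compGenus, pInl_eq_iff hK, pInr_eq_iff hK, Subtype.map, id]
  rw [Finset.sum_filter_subtype_val_eq (fun c => G₁ c - 1),
    Finset.sum_filter_subtype_val_eq (fun c => G₂ c - 1), Finset.card_filter_subtype_val_eq]

end Subtypes

end Pushout

namespace Cob

variable {m n : Type} (φ : Cob m n)

noncomputable abbrev cofibFactor :
    Cob m {c : φ.C // (∃ x, φ.lm x = c) ∧ ∃ y, φ.ln y = c} where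
  C := {c : φ.C // (∃ x, φ.lm x = c) ∨ ∀ y, φ.ln y ≠ c}
  lm x := ⟨φ.lm x, Or.inl ⟨x, rfl⟩⟩
  ln := Subtype.map id fun _ h => Or.inl h.1
  g a := φ.g a.1

noncomputable abbrev fibFactor :
    Cob {c : φ.C // (∃ x, φ.lm x = c) ∧ ∃ y, φ.ln y = c} n where
  C := {c : φ.C // ∃ y, φ.ln y = c}
  lm := Subtype.map id fun _ h => h.2
  ln y := ⟨φ.ln y, y, rfl⟩
  g b := if ∃ x, φ.lm x = b.1 then 0 else φ.g b.1

theorem cofibFactor_isCofib : (cofibFactor φ).IsCofib :=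
  ⟨fun _ _ h => Subtype.ext (congrArg Subtype.val h :),
    fun z => z.2.1.choose, fun z => Subtype.ext z.2.1.choose_spec⟩

theorem fibFactor_isFib : (fibFactor φ).IsFib :=
  ⟨fun _ _ h => Subtype.ext (congrArg Subtype.val h :),
    fun ⟨_, y, hy⟩ => ⟨y, Subtype.ext hy⟩, fun z => if_pos z.2.1⟩

theorem cast_g_eq_factor_genera (c : φ.C) :
    (φ.g c : ℤ) = 1
      + (if (∃ x, φ.lm x = c) ∨ ∀ y, φ.ln y ≠ c then (φ.g c : ℤ) - 1 else 0)
      + (if ∃ y, φ.ln y = c then ((if ∃ x, φ.lm x = c then 0 else φ.g c : ℕ) : ℤ) - 1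
          else 0)
      + (if (∃ x, φ.lm x = c) ∧ ∃ y, φ.ln y = c then 1 else 0) := by
  by_cases hA : ∃ x, φ.lm x = c <;> by_cases hB : ∃ y, φ.ln y = c <;>
    simp [hA, hB, ← not_exists]

theorem comp_fibFactor_cofibFactor_equiv : Cob.Equiv ((fibFactor φ).comp (cofibFactor φ)) φ := by
  have hK : ∀ c, ((∃ x, φ.lm x = c) ∨ ∀ y, φ.ln y ≠ c) → (∃ y, φ.ln y = c) →
      (∃ x, φ.lm x = c) ∧ ∃ y, φ.ln y = c := fun c hA ⟨y, hy⟩ =>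
    ⟨hA.resolve_right fun h => h y hy, y, hy⟩
  let val : Pushout (cofibFactor φ).ln (fibFactor φ).lm → φ.C :=
    Pushout.val (fun _ h => Or.inl h.1) fun _ h => h.2
  have hval : Function.Bijective val := ⟨Pushout.val_injective hK, Pushout.val_surjective
    fun c => (em (∃ y, φ.ln y = c)).symm.imp_left fun h => Or.inr fun y hy => h ⟨y, hy⟩⟩
  refine ⟨Equiv.ofBijective val hval, fun _ => rfl, fun _ => rfl,
    fun (x : Pushout (cofibFactor φ).ln (fibFactor φ).lm) => ?_⟩
  change φ.g (val x) = (compGenus _ _ _ _ x).toNat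
  rw [Pushout.compGenus_eq hK (fun c => (φ.g c : ℤ))
    (fun c => ((if ∃ x, φ.lm x = c then 0 else φ.g c : ℕ) : ℤ)) x,
    ← cast_g_eq_factor_genera, Int.toNat_natCast]

end Cob

/-- Proposition 4.3, existence: every combinatorial 2-cobordism factors
as a cofibration followed by a fibration, with intermediate set `im(l_m) ∩ im(l_n)`,
cofibration component set `im(l_m) ∪ (C \ im(l_n))` and fibration component set `im(l_n)`. -/
theorem stmt_6 {m n : Type} (φ : Cob m n) :
    ∃ (e : Cob m {c : φ.C // (∃ x, φ.lm x = c) ∧ ∃ y, φ.ln y = c})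
      (f : Cob {c : φ.C // (∃ x, φ.lm x = c) ∧ ∃ y, φ.ln y = c} n),
      e.IsCofib ∧ f.IsFib ∧
      Nonempty (e.C ≃ {c : φ.C // (∃ x, φ.lm x = c) ∨ ∀ y, φ.ln y ≠ c}) ∧
      Nonempty (f.C ≃ {c : φ.C // ∃ y, φ.ln y = c}) ∧
      Cob.Equiv (Cob.comp f e) φ :=
  ⟨φ.cofibFactor, φ.fibFactor, φ.cofibFactor_isCofib, φ.fibFactor_isFib, ⟨Equiv.refl _⟩,
    ⟨Equiv.refl _⟩, φ.comp_fibFactor_cofibFactor_equiv⟩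
end

section
/- In any factorization of a combinatorial 2-cobordism (C, l_m, l_n, g) as a composite through an intermediate finite set k, the cardinality of k is at least the cardinality of im(l_m) ∩ im(l_n); moreover equality holds for the cofibration-fibration factorization. -/
open scoped Classical

lemma pushout_inl_eq_inr {k A B : Type} {f : k → A} {g : k → B} {a : A} {b : B}
    (h : pInl f g a = pInr f g b) : ∃ z, f z = a := by
  by_contra hc
  push_neg at hc
  have hs : ∀ x y : A ⊕ B, PRel f g x y → (x = Sum.inl a) = (y = Sum.inl a) := by
    rintro x y ⟨z, rfl, rfl⟩
    simp only [eq_iff_iff, Sum.inl.injEq]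
    constructor
    · intro h'; exact absurd h' (hc z)
    · intro h'; cases h'
  have := congrArg (Quot.lift (fun x : A ⊕ B => x = Sum.inl a) hs) h
  simp [pInl, pInr] at this

lemma pushout_inr_inj {k A B : Type} {f : k → A} {g : k → B}
    (hf : Function.Injective f) {b1 b2 : B}
    (h : pInr f g b1 = pInr f g b2) : b1 = b2 := by
  classical
  set s : A ⊕ B → Prop := fun x =>
    match x with
    | .inl a => ∃ z, f z = a ∧ g z = b1
    | .inr b => b = b1 with hsdef
  have hs : ∀ x y : A ⊕ B, PRel f g x y → s x = s y := by
    rintro x y ⟨z, rfl, rfl⟩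
    simp only [hsdef, eq_iff_iff]
    constructor
    · rintro ⟨z', hz1, hz2⟩
      rw [← hz2, hf hz1]
    · intro h'; exact ⟨z, rfl, h'⟩
  have := congrArg (Quot.lift s hs) h
  simp only [pInr] at this
  have h2 : s (Sum.inr b1) = s (Sum.inr b2) := this
  simp only [hsdef, eq_iff_iff] at h2
  exact (h2.mp trivial).symm

/-- Lemma 5.4.2: in any factorization of a 2-cobordism through an
intermediate finite set `k`, `|k| ≥ |im(l_m) ∩ im(l_n)|`, with equality for the
cofibration-fibration factorization. -/
theorem stmt_7 {m n : Type} (φ : Cob m n) (k : Type) (fk : Fintype k)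
    (e : Cob m k) (f : Cob k n)
    (h : Cob.Equiv (@Cob.comp m k n fk f e) φ) :
    Nat.card {c : φ.C // (∃ x, φ.lm x = c) ∧ ∃ y, φ.ln y = c} ≤ Nat.card k ∧
      (e.IsCofib → f.IsFib →
        Nat.card k = Nat.card {c : φ.C // (∃ x, φ.lm x = c) ∧ ∃ y, φ.ln y = c}) := by
  classical
  obtain ⟨χ, hm, hn, hg⟩ := h
  have hm' : ∀ x, χ (pInl e.ln f.lm (e.lm x)) = φ.lm x := hm
  have hn' : ∀ y, χ (pInr e.ln f.lm (f.ln y)) = φ.ln y := hn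
  have key : ∀ c : {c : φ.C // (∃ x, φ.lm x = c) ∧ ∃ y, φ.ln y = c},
      ∃ z : k, χ (pInl e.ln f.lm (e.ln z)) = (c : φ.C) := by
    rintro ⟨c, ⟨x, hx⟩, ⟨y, hy⟩⟩
    have h1 : χ (pInl e.ln f.lm (e.lm x)) = c := by rw [hm' x, hx]
    have h2 : χ (pInr e.ln f.lm (f.ln y)) = c := by rw [hn' y, hy]
    have h3 : pInl e.ln f.lm (e.lm x) = pInr e.ln f.lm (f.ln y) :=
      χ.injective (by rw [h1, h2])
    obtain ⟨z, hz⟩ := pushout_inl_eq_inr h3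
    exact ⟨z, by rw [hz, h1]⟩
  constructor
  · have hinj : Function.Injective
        (fun c : {c : φ.C // (∃ x, φ.lm x = c) ∧ ∃ y, φ.ln y = c} =>
          (key c).choose) := by
      intro c1 c2 hcc
      have hcc' : (key c1).choose = (key c2).choose := hcc
      have h1 := (key c1).choose_spec
      have h2 := (key c2).choose_spec
      apply Subtype.ext
      rw [← h1, ← h2, hcc']
    exact Nat.card_le_card_of_injective _ hinj
  · rintro ⟨hninj, u, hu⟩ ⟨hminj, hsurj, hg0⟩
    have hPR : ∀ z : k, pInl e.ln f.lm (e.ln z) = pInr e.ln f.lm (f.lm z) :=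
      fun z => Quot.sound ⟨z, rfl, rfl⟩
    have hmem : ∀ z : k, (∃ x, φ.lm x = χ (pInl e.ln f.lm (e.ln z))) ∧
        ∃ y, φ.ln y = χ (pInl e.ln f.lm (e.ln z)) := by
      intro z
      constructor
      · exact ⟨u z, by rw [← hm' (u z), hu z]⟩
      · obtain ⟨y, hy⟩ := hsurj (f.lm z)
        exact ⟨y, by rw [← hn' y, hy, hPR z]⟩
    set F : k → {c : φ.C // (∃ x, φ.lm x = c) ∧ ∃ y, φ.ln y = c} :=
      fun z => ⟨χ (pInl e.ln f.lm (e.ln z)), hmem z⟩ with hF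
    have hFinj : Function.Injective F := by
      intro z1 z2 hz
      have : χ (pInl e.ln f.lm (e.ln z1)) = χ (pInl e.ln f.lm (e.ln z2)) :=
        congrArg Subtype.val hz
      have h4 : pInl e.ln f.lm (e.ln z1) = pInl e.ln f.lm (e.ln z2) := χ.injective this
      have h5 : pInr e.ln f.lm (f.lm z1) = pInr e.ln f.lm (f.lm z2) := by
        rw [← hPR z1, ← hPR z2]; exact h4
      exact hminj (pushout_inr_inj hninj h5)
    have hFsurj : Function.Surjective F := by
      intro c
      obtain ⟨z, hz⟩ := key c
      exact ⟨z, Subtype.ext hz⟩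
    exact Nat.card_eq_of_bijective F ⟨hFinj, hFsurj⟩
end

section
/- The cofibration-fibration factorization of a combinatorial 2-cobordism is unique: any two factorizations of the same cobordism as a cofibration followed by a fibration are related by bijections ψ: A ≅ A', φ: B ≅ B', χ: k ≅ k' compatible with all structure maps and genus functions. -/
/-!
When both gluing maps `l_n : k → A` and `l_m : k → B` are injective, the pushout `A ⊔_k B` is
`A ∪ B` with the two copies of `k` identified, and the three pieces can be read off from the
boundary maps of the composite alone: `B` is the image of `n` (fibrations are surjective on `n`),
`k` is the intersection of the images of `m` and `n` (cofibrations lift `k` through `m`), and `A`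
is the image of `m` together with everything outside the image of `n`. An equivalence of
composites preserves these images, hence restricts to bijections of `A`, `B` and `k`. The genus
formula returns the genus of every component of `A` (a fibration has genus `0` on `k`) and of
every component of `B` off `k`, while on `l_m(k)` both genera vanish.
-/

open scoped Classical

open Function Set

section PushoutOfInjective

variable {k A B : Type} {α : k → A} {β : k → B}

theorem pInl_eq_pInr (z : k) : pInl α β (α z) = pInr α β (β z) :=
  Quot.sound ⟨z, rfl, rfl⟩

theorem exists_pInl_or_pInr (x : Pushout α β) :
    (∃ a, pInl α β a = x) ∨ ∃ b, pInr α β b = x := by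
  induction x using Quot.ind with
  | mk x => cases x with
    | inl a => exact .inl ⟨a, rfl⟩
    | inr b => exact .inr ⟨b, rfl⟩

/-- The normal form of a point of the pushout: points of `β(k)` are represented in `A`. -/
noncomputable def Pushout.toSum (hβ : Injective β) : Pushout α β → A ⊕ B :=
  Quot.lift (Sum.elim Sum.inl (extend β (Sum.inl ∘ α) Sum.inr))
    (by rintro _ _ ⟨z, rfl, rfl⟩; simp [hβ.extend_apply])

theorem pInl_injective (hβ : Injective β) : Injective (pInl α β) :=
  fun _ _ h => Sum.inl_injective (congrArg (Pushout.toSum hβ) h)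

theorem pInl_eq_pInr_iff (hβ : Injective β) {a : A} {b : B} :
    pInl α β a = pInr α β b ↔ ∃ z, α z = a ∧ β z = b := by
  refine ⟨fun h => ?_, fun ⟨z, ha, hb⟩ => ha ▸ hb ▸ pInl_eq_pInr z⟩
  have h := congrArg (Pushout.toSum hβ) h
  by_cases hb : ∃ z, β z = b
  · obtain ⟨z, rfl⟩ := hb
    simp only [Pushout.toSum, pInl, pInr, Sum.elim_inl, Sum.elim_inr, hβ.extend_apply] at h
    exact ⟨z, (Sum.inl_injective h).symm, rfl⟩
  · simp [Pushout.toSum, pInl, pInr, extend_apply' _ _ _ hb] at h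

theorem pInr_injective (hα : Injective α) (hβ : Injective β) : Injective (pInr α β) := by
  have of_range : ∀ z b, pInr α β (β z) = pInr α β b → β z = b := fun z b h => by
    obtain ⟨z', hz', rfl⟩ := (pInl_eq_pInr_iff hβ).1 ((pInl_eq_pInr z).trans h)
    rw [hα hz']
  intro b b' h
  by_cases hb : ∃ z, β z = b
  · obtain ⟨z, rfl⟩ := hb
    exact of_range z b' h
  by_cases hb' : ∃ z, β z = b'
  · obtain ⟨z, rfl⟩ := hb'
    exact (of_range z b h.symm).symm
  simpa [Pushout.toSum, pInr, extend_apply' _ _ _ hb, extend_apply' _ _ _ hb'] using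
    congrArg (Pushout.toSum hβ) h

end PushoutOfInjective

section Genus

variable {k A B : Type} [Fintype k] [Fintype A] [Fintype B] {α : k → A} {β : k → B}
  {g1 : A → ℤ} {g2 : B → ℤ}

omit [Fintype A] in
theorem filter_pInr_eq_pInl (hβ : Injective β) (a : A) :
    Finset.univ.filter (fun b => pInr α β b = pInl α β a) =
      (Finset.univ.filter fun z => α z = a).map ⟨β, hβ⟩ := by
  ext b
  simp [eq_comm (a := pInr α β b), pInl_eq_pInr_iff hβ]

theorem compGenus_pInl (hβ : Injective β) (a : A) :
    compGenus α β g1 g2 (pInl α β a) = g1 a + ∑ z with α z = a, g2 (β z) := by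
  simp only [compGenus, filter_pInr_eq_pInl hβ, Finset.sum_map, (pInl_injective hβ).eq_iff]
  simp [Finset.sum_sub_distrib, Finset.filter_eq' Finset.univ a]
  ring

theorem compGenus_pInr_of_notMem (hα : Injective α) (hβ : Injective β) {b : B}
    (hb : b ∉ range β) : compGenus α β g1 g2 (pInr α β b) = g2 b := by
  have not_glued : ∀ a, pInl α β a ≠ pInr α β b := fun a h =>
    hb <| let ⟨z, _, hz⟩ := (pInl_eq_pInr_iff hβ).1 h; ⟨z, hz⟩
  simp [compGenus, (pInr_injective hα hβ).eq_iff, not_glued, Finset.filter_eq' Finset.univ b]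

end Genus

section RangesInPushout

variable {k A B m n : Type} {α : k → A} {β : k → B} {μ : m → A} {ν : n → B}

theorem range_pInl_eq (hβ : Injective β) (hαμ : range α ⊆ range μ) (hν : Surjective ν) :
    range (pInl α β) = range (pInl α β ∘ μ) ∪ (range (pInr α β ∘ ν))ᶜ := by
  rw [hν.range_comp]
  ext p
  constructor
  · rintro ⟨a, rfl⟩
    by_cases ha : a ∈ range α
    · obtain ⟨x, hx⟩ := hαμ ha
      exact .inl ⟨x, by simp [hx]⟩
    · exact .inr fun ⟨b, hb⟩ =>
        ha <| let ⟨z, hz, _⟩ := (pInl_eq_pInr_iff hβ).1 hb.symm; ⟨z, hz⟩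
  · rintro (⟨x, rfl⟩ | hp)
    · exact ⟨_, rfl⟩
    · exact (exists_pInl_or_pInr p).resolve_right hp

theorem range_pInl_comp_eq (hβ : Injective β) (hαμ : range α ⊆ range μ) (hν : Surjective ν) :
    range (pInl α β ∘ α) = range (pInl α β ∘ μ) ∩ range (pInr α β ∘ ν) := by
  rw [hν.range_comp]
  ext p
  constructor
  · rintro ⟨z, rfl⟩
    obtain ⟨x, hx⟩ := hαμ ⟨z, rfl⟩
    exact ⟨⟨x, by simp [hx]⟩, ⟨β z, (pInl_eq_pInr z).symm⟩⟩
  · rintro ⟨⟨x, rfl⟩, ⟨b, hb⟩⟩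
    obtain ⟨z, hz, -⟩ := (pInl_eq_pInr_iff hβ).1 hb.symm
    exact ⟨z, by simp [hz]⟩

end RangesInPushout

theorem Equiv.apply_mem_range_iff {X P P' : Type} {i : X → P} {i' : X → P'} (χ : P ≃ P')
    (h : ∀ x, χ (i x) = i' x) (p : P) : χ p ∈ range i' ↔ p ∈ range i := by
  constructor
  · rintro ⟨x, hx⟩
    exact ⟨x, χ.injective ((h x).trans hx)⟩
  · rintro ⟨x, rfl⟩
    exact ⟨x, (h x).symm⟩

theorem Equiv.exists_equiv_comp_eq_of_range {A A' P P' : Type} {i : A → P} {i' : A' → P'}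
    (hi : Injective i) (hi' : Injective i') (χ : P ≃ P')
    (h : ∀ p, χ p ∈ range i' ↔ p ∈ range i) :
    ∃ ψ : A ≃ A', ∀ a, i' (ψ a) = χ (i a) :=
  ⟨(Equiv.ofInjective i hi).trans
      ((χ.subtypeEquiv fun p => (h p).symm).trans (Equiv.ofInjective i' hi').symm),
    fun a => by simp [Equiv.apply_ofInjective_symm]⟩

namespace Cob

variable {m k n k' : Type} {e : Cob m k} {f : Cob k n} {e' : Cob m k'} {f' : Cob k' n}

theorem IsCofib.range_ln_subset (he : e.IsCofib) : range e.ln ⊆ range e.lm := by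
  obtain ⟨u, hu⟩ := he.2
  rintro _ ⟨z, rfl⟩
  exact ⟨u z, hu z⟩

theorem exists_equivs_of_pushout_equiv (he : e.IsCofib) (hf : f.IsFib) (he' : e'.IsCofib)
    (hf' : f'.IsFib) (χ₀ : Pushout e.ln f.lm ≃ Pushout e'.ln f'.lm)
    (hlm : ∀ x, χ₀ ((pInl e.ln f.lm ∘ e.lm) x) = (pInl e'.ln f'.lm ∘ e'.lm) x)
    (hln : ∀ y, χ₀ ((pInr e.ln f.lm ∘ f.ln) y) = (pInr e'.ln f'.lm ∘ f'.ln) y) :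
    ∃ (ψ : e.C ≃ e'.C) (φ : f.C ≃ f'.C) (χ : k ≃ k'),
      (∀ a, pInl e'.ln f'.lm (ψ a) = χ₀ (pInl e.ln f.lm a)) ∧
      (∀ b, pInr e'.ln f'.lm (φ b) = χ₀ (pInr e.ln f.lm b)) ∧
      ∀ z, pInl e'.ln f'.lm (e'.ln (χ z)) = χ₀ (pInl e.ln f.lm (e.ln z)) := by
  have hlm' := χ₀.apply_mem_range_iff hlm
  have hln' := χ₀.apply_mem_range_iff hln
  obtain ⟨ψ, hψ⟩ := χ₀.exists_equiv_comp_eq_of_range (pInl_injective hf.1)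
    (pInl_injective hf'.1) fun p => by
      rw [range_pInl_eq hf.1 he.range_ln_subset hf.2.1,
        range_pInl_eq hf'.1 he'.range_ln_subset hf'.2.1]
      exact (hlm' p).or (hln' p).not
  obtain ⟨φ, hφ⟩ := χ₀.exists_equiv_comp_eq_of_range (pInr_injective he.1 hf.1)
    (pInr_injective he'.1 hf'.1) fun p => by
      rw [← hf.2.1.range_comp (pInr e.ln f.lm), ← hf'.2.1.range_comp (pInr e'.ln f'.lm)]
      exact hln' p
  obtain ⟨χ, hχ⟩ := χ₀.exists_equiv_comp_eq_of_range ((pInl_injective hf.1).comp he.1)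
    ((pInl_injective hf'.1).comp he'.1) fun p => by
      rw [range_pInl_comp_eq hf.1 he.range_ln_subset hf.2.1,
        range_pInl_comp_eq hf'.1 he'.range_ln_subset hf'.2.1]
      exact (hlm' p).and (hln' p)
  exact ⟨ψ, φ, χ, hψ, hφ, hχ⟩

variable [Fintype k]

theorem comp_g_pInl (hβ : Injective f.lm) (hf0 : ∀ z, f.g (f.lm z) = 0) (a : e.C) :
    (f.comp e).g (pInl e.ln f.lm a) = e.g a := by
  simp [Cob.comp, compGenus_pInl hβ, hf0]

theorem comp_g_pInr (hα : Injective e.ln) (hβ : Injective f.lm) {b : f.C}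
    (hb : b ∉ range f.lm) : (f.comp e).g (pInr e.ln f.lm b) = f.g b := by
  simp [Cob.comp, compGenus_pInr_of_notMem hα hβ hb]

theorem Equiv.exists_pushout_equiv [Fintype k'] (h : (f.comp e).Equiv (f'.comp e')) :
    ∃ χ : Pushout e.ln f.lm ≃ Pushout e'.ln f'.lm,
      (∀ x, χ ((pInl e.ln f.lm ∘ e.lm) x) = (pInl e'.ln f'.lm ∘ e'.lm) x) ∧
      (∀ y, χ ((pInr e.ln f.lm ∘ f.ln) y) = (pInr e'.ln f'.lm ∘ f'.ln) y) ∧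
      ∀ c, (f'.comp e').g (χ c) = (f.comp e).g c :=
  h

end Cob

/-- Proposition 4.3, uniqueness: any two cofibration-fibration
factorizations of the same cobordism are related by bijections `χ : k ≃ k'`,
`ψ : A ≃ A'`, `φ : B ≃ B'` compatible with all structure maps and genus functions. -/
theorem stmt_9 {m n k k' : Type} (fk : Fintype k) (fk' : Fintype k')
    (e : Cob m k) (f : Cob k n) (e' : Cob m k') (f' : Cob k' n)
    (he : e.IsCofib) (hf : f.IsFib) (he' : e'.IsCofib) (hf' : f'.IsFib)
    (h : Cob.Equiv (@Cob.comp m k n fk f e) (@Cob.comp m k' n fk' f' e')) :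
    ∃ (χ : k ≃ k') (ψ : e.C ≃ e'.C) (φb : f.C ≃ f'.C),
      (∀ x, ψ (e.lm x) = e'.lm x) ∧ (∀ y, φb (f.ln y) = f'.ln y) ∧
      (∀ z, ψ (e.ln z) = e'.ln (χ z)) ∧ (∀ z, φb (f.lm z) = f'.lm (χ z)) ∧
      (∀ a, e'.g (ψ a) = e.g a) ∧ (∀ b, f'.g (φb b) = f.g b) := by
  obtain ⟨χ₀, hlm, hln, hg⟩ := h.exists_pushout_equiv
  obtain ⟨ψ, φb, χ, hψ, hφ, hχ⟩ := Cob.exists_equivs_of_pushout_equiv he hf he' hf' χ₀ hlm hln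
  have hφk z : φb (f.lm z) = f'.lm (χ z) := pInr_injective he'.1 hf'.1 <| by
    rw [hφ, ← pInl_eq_pInr, ← pInl_eq_pInr, hχ]
  refine ⟨χ, ψ, φb, fun x => pInl_injective hf'.1 ((hψ _).trans (hlm x)),
    fun y => pInr_injective he'.1 hf'.1 ((hφ _).trans (hln y)),
    fun z => pInl_injective hf'.1 ((hψ _).trans (hχ z).symm), hφk, fun a => ?_, fun b => ?_⟩
  · rw [← Cob.comp_g_pInl hf'.1 hf'.2.2, hψ, hg, Cob.comp_g_pInl hf.1 hf.2.2]
  by_cases hb : b ∈ range f.lm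
  · obtain ⟨z, rfl⟩ := hb
    rw [hφk, hf.2.2, hf'.2.2]
  have hb' : φb b ∉ range f'.lm := fun ⟨z', hz'⟩ =>
    hb ⟨χ.symm z', φb.injective (by rw [hφk, χ.apply_symm_apply, hz'])⟩
  rw [← Cob.comp_g_pInr he'.1 hf'.1 hb', hφ, hg, Cob.comp_g_pInr he.1 hf.1 hb]
end

section
/- The snake/zig-zag identity holds in combinatorial 2-Cob: for a finite set n, let η be the cobordism from ∅ to n ⊔ n with component set n, both copies of n mapping identically, and genus 0; and let ε be the dual cobordism from n ⊔ n to ∅. Then the composite (id ⊗ ε)(η ⊗ id): n → n (appropriately bracketed) is the identity cobordism on n: its component set is in bijection with n with both structure maps being this bijection, and its genus function is identically zero. -/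
open scoped Classical

/-- The cobordism `η ⊗ id : n → n ⊔ n ⊔ n` with component set `2n`,
`a(x) = x`, `b(x,1) = x`, `b(x,2) = b(x,3) = x + n`, genus `0`. -/
def cupId (n : ℕ) : Cob (Fin n) (Fin n ⊕ (Fin n ⊕ Fin n)) where
  C := Fin n ⊕ Fin n
  lm := Sum.inl
  ln := Sum.elim Sum.inl (Sum.elim Sum.inr Sum.inr)
  g := fun _ => 0

/-- The cobordism `id ⊗ ε : n ⊔ n ⊔ n → n` with component set `2n`,
`c(x,3) = x`, `c(x,1) = c(x,2) = x + n`, `d(x) = x`, genus `0`. -/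
def idCap (n : ℕ) : Cob (Fin n ⊕ (Fin n ⊕ Fin n)) (Fin n) where
  C := Fin n ⊕ Fin n
  lm := Sum.elim Sum.inr (Sum.elim Sum.inr Sum.inl)
  ln := Sum.inl
  g := fun _ => 0

/-- The identity cobordism. -/
def Cob.idCob (n : Type) [Fintype n] : Cob n n where
  C := n
  lm := fun x => x
  ln := fun x => x
  g := fun _ => 0

/-! In the pushout, for each `x : Fin n` the two components `x`, `x + n` of `cupId n` and the two
of `idCap n` are glued along the three points `(x, 1), (x, 2), (x, 3)` of `n ⊔ n ⊔ n` into one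
component, and nothing else is glued, so the components of the composite are indexed by `Fin n`.
Four genus-zero pieces glued along three points form a tree, and the genus formula gives
`1 + 4 · (0 - 1) + 3 = 0`. -/

theorem pInl_eq_pInr_s12 {k A B : Type} (f : k → A) (g : k → B) (z : k) :
    pInl f g (f z) = pInr f g (g z) :=
  Quot.sound ⟨z, rfl, rfl⟩

theorem compGenus_zero_zero {k A B : Type} [Fintype k] [Fintype A] [Fintype B]
    (f : k → A) (g : k → B) (x : Pushout f g) :
    compGenus f g (fun _ => 0) (fun _ => 0) x =
      1 - (Finset.univ.filter (fun a => pInl f g a = x)).card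
        - (Finset.univ.filter (fun b => pInr f g b = x)).card
        + (Finset.univ.filter (fun y : k => pInl f g (f y) = x)).card := by
  simp only [compGenus, zero_sub, Finset.sum_neg_distrib, Finset.sum_const, nsmul_eq_mul,
    mul_one]
  ring

theorem card_filter_elim_id_id {α : Type} [Fintype α] [DecidableEq α] (x : α) :
    (Finset.univ.filter (fun a : α ⊕ α => Sum.elim id id a = x)).card = 2 := by
  have hfiber : Finset.univ.filter (fun a : α ⊕ α => Sum.elim id id a = x) = {Sum.inl x, Sum.inr x} := by
    ext (a | a) <;> simp [eq_comm]
  rw [hfiber, Finset.card_pair Sum.inl_ne_inr]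

namespace Snake

variable {n : ℕ}

def componentEquiv (n : ℕ) : Pushout (cupId n).ln (idCap n).lm ≃ Fin n where
  toFun := Quot.lift (Sum.elim (Sum.elim id id) (Sum.elim id id)) (by
    rintro _ _ ⟨z, rfl, rfl⟩
    rcases z with x | x | x <;> rfl)
  invFun x := pInl _ _ (Sum.inl x)
  left_inv := by
    rintro ⟨(x | x) | (x | x)⟩
    · rfl
    · exact (pInl_eq_pInr_s12 _ _ (Sum.inl x)).trans (pInl_eq_pInr_s12 _ _ (Sum.inr (Sum.inl x))).symm
    · exact ((pInl_eq_pInr_s12 _ _ (Sum.inl x)).trans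
        (pInl_eq_pInr_s12 _ _ (Sum.inr (Sum.inl x))).symm).trans
        (pInl_eq_pInr_s12 _ _ (Sum.inr (Sum.inr x)))
    · exact pInl_eq_pInr_s12 _ _ (Sum.inl x)
  right_inv _ := rfl

theorem card_filter_cupId_ln (x : Fin n) :
    (Finset.univ.filter (fun y => Sum.elim id id ((cupId n).ln y) = x)).card = 3 := by
  have hfiber : Finset.univ.filter (fun y => Sum.elim id id ((cupId n).ln y) = x) =
      {Sum.inl x, Sum.inr (Sum.inl x), Sum.inr (Sum.inr x)} := by
    ext (y | y | y) <;> simp [cupId, eq_comm]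
  rw [hfiber, Finset.card_insert_of_notMem (by simp), Finset.card_pair (by simp)]

theorem card_filter_pInl_eq (x : Fin n) :
    (Finset.univ.filter
      (fun a => pInl (cupId n).ln (idCap n).lm a = (componentEquiv n).symm x)).card = 2 := by
  simp only [Equiv.eq_symm_apply]
  exact card_filter_elim_id_id x

theorem card_filter_pInr_eq (x : Fin n) :
    (Finset.univ.filter
      (fun b => pInr (cupId n).ln (idCap n).lm b = (componentEquiv n).symm x)).card = 2 := by
  simp only [Equiv.eq_symm_apply]
  exact card_filter_elim_id_id x

theorem card_filter_glue_eq (x : Fin n) :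
    (Finset.univ.filter (fun y =>
      pInl (cupId n).ln (idCap n).lm ((cupId n).ln y) = (componentEquiv n).symm x)).card = 3 := by
  simp only [Equiv.eq_symm_apply]
  exact card_filter_cupId_ln x

theorem compGenus_eq_zero (x : Fin n) :
    compGenus (cupId n).ln (idCap n).lm (fun _ => 0) (fun _ => 0)
      ((componentEquiv n).symm x) = 0 := by
  rw [compGenus_zero_zero, card_filter_pInl_eq, card_filter_pInr_eq, card_filter_glue_eq]
  norm_num

end Snake

/-- snake identity, Proposition 5.3.3: the composite
`(id ⊗ ε)(η ⊗ id) : n → n` is the identity cobordism on `n`. -/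
theorem stmt_12 (n : ℕ) :
    Cob.Equiv (Cob.comp (idCap n) (cupId n)) (Cob.idCob (Fin n)) := by
  refine ⟨Snake.componentEquiv n, fun _ => rfl, fun _ => rfl, fun c => ?_⟩
  obtain ⟨x, rfl⟩ := (Snake.componentEquiv n).symm.surjective c
  show 0 = (compGenus _ _ (fun _ => 0) (fun _ => 0) _).toNat
  rw [Snake.compGenus_eq_zero]
  rfl
end

section
/- In the composite of the cup-cap cobordisms witnessing compactness of 2-Cob, the pushout identifies elements of 2n ⊔ 2n exactly when they are congruent mod n, so the pushout has exactly n elements, and the genus of each element of the pushout computed by the genus formula is 1 − 4 + 3 = 0. -/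
open scoped Classical

/-- The left leg of the cup-cap span, `(x,1) ↦ x`, `(x,2),(x,3) ↦ x+n`. -/
def capMapL (n : ℕ) : (Fin n ⊕ (Fin n ⊕ Fin n)) → (Fin n ⊕ Fin n) :=
  Sum.elim Sum.inl (Sum.elim Sum.inr Sum.inr)

/-- The right leg of the cup-cap span, `(x,3) ↦ x`, `(x,1),(x,2) ↦ x+n`. -/
def capMapR (n : ℕ) : (Fin n ⊕ (Fin n ⊕ Fin n)) → (Fin n ⊕ Fin n) :=
  Sum.elim Sum.inr (Sum.elim Sum.inr Sum.inl)

/-! The gluing along `(x,1)`, `(x,2)`, `(x,3)` links every element of `2n ⊔ 2n` of residue `x`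
to the element `x+n` of the second copy in at most two steps, and it preserves residues mod `n`.
So the residue is a complete invariant of the pushout, which is therefore `n`. Each class then
meets each copy of `2n` in two points and `n ⊔ n ⊔ n` in three, giving genus `1 − 2 − 2 + 3 = 0`.
-/

section QuotRetraction

variable {α β : Type*} {r : α → α → Prop} (e : α → β) (he : ∀ a b, r a b → e a = e b)
  (s : β → α) (hse : ∀ a, Quot.mk r (s (e a)) = Quot.mk r a)
include he hse

theorem Quot.mk_eq_mk_iff_of_retraction (a b : α) :
    Quot.mk r a = Quot.mk r b ↔ e a = e b :=
  ⟨fun h => congrArg (Quot.lift e he) h, fun h => by rw [← hse a, ← hse b, h]⟩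

def Quot.equivOfRetraction (hes : ∀ b, e (s b) = b) : Quot r ≃ β where
  toFun := Quot.lift e he
  invFun b := Quot.mk r (s b)
  left_inv := Quot.ind hse
  right_inv := hes

end QuotRetraction

theorem card_filter_sumElim_id_eq {α : Type*} [Fintype α] [DecidableEq α] (i : α) :
    (Finset.univ.filter fun a : α ⊕ α => Sum.elim id id a = i).card = 2 := by
  rw [show (Finset.univ.filter fun a : α ⊕ α => Sum.elim id id a = i) = {.inl i, .inr i} by
    ext (a | a) <;> simp [eq_comm]]
  simp

theorem card_filter_sumElim_sumElim_id_eq {α : Type*} [Fintype α] [DecidableEq α] (i : α) :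
    (Finset.univ.filter fun z : α ⊕ α ⊕ α => Sum.elim id (Sum.elim id id) z = i).card = 3 := by
  rw [show (Finset.univ.filter fun z : α ⊕ α ⊕ α => Sum.elim id (Sum.elim id id) z = i) =
      {.inl i, .inr (.inl i), .inr (.inr i)} by
    ext (z | z | z) <;> simp [eq_comm]]
  simp

theorem compGenus_zero {k A B : Type} [Fintype k] [Fintype A] [Fintype B]
    (f : k → A) (g : k → B) (x : Pushout f g) :
    compGenus f g (fun _ => 0) (fun _ => 0) x =
      1 - (Finset.univ.filter fun a => pInl f g a = x).card
        - (Finset.univ.filter fun b => pInr f g b = x).card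
        + (Finset.univ.filter fun y => pInl f g (f y) = x).card := by
  simp only [compGenus, zero_sub, Finset.sum_neg_distrib, Finset.sum_const, nsmul_eq_mul,
    mul_one]
  ring

namespace CupCap

variable {n : ℕ}

/-- Reduction mod `n` on `2n ⊔ 2n`. -/
def residue (n : ℕ) : (Fin n ⊕ Fin n) ⊕ (Fin n ⊕ Fin n) → Fin n :=
  Sum.elim (Sum.elim id id) (Sum.elim id id)

theorem residue_eq_of_prel {p q} (h : PRel (capMapL n) (capMapR n) p q) :
    residue n p = residue n q := by
  obtain ⟨z | z | z, rfl, rfl⟩ := h <;> rfl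

theorem mk_inl_eq_mk_inr (z : Fin n ⊕ Fin n ⊕ Fin n) :
    Quot.mk (PRel (capMapL n) (capMapR n)) (.inl (capMapL n z)) =
      Quot.mk _ (.inr (capMapR n z)) :=
  Quot.sound ⟨z, rfl, rfl⟩

theorem mk_residue (p : (Fin n ⊕ Fin n) ⊕ (Fin n ⊕ Fin n)) :
    Quot.mk (PRel (capMapL n) (capMapR n)) (.inr (.inr (residue n p))) = Quot.mk _ p := by
  rcases p with (x | x) | (x | x)
  · exact (mk_inl_eq_mk_inr (.inl x)).symm
  · exact (mk_inl_eq_mk_inr (.inr (.inl x))).symm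
  · exact (mk_inl_eq_mk_inr (.inr (.inl x))).symm.trans (mk_inl_eq_mk_inr (.inr (.inr x)))
  · rfl

theorem mk_eq_mk_iff (p q : (Fin n ⊕ Fin n) ⊕ (Fin n ⊕ Fin n)) :
    Quot.mk (PRel (capMapL n) (capMapR n)) p = Quot.mk _ q ↔ residue n p = residue n q :=
  Quot.mk_eq_mk_iff_of_retraction _ (fun _ _ => residue_eq_of_prel) (.inr ∘ .inr) mk_residue
    p q

def pushoutEquiv (n : ℕ) : Pushout (capMapL n) (capMapR n) ≃ Fin n :=
  Quot.equivOfRetraction (residue n) (fun _ _ => residue_eq_of_prel) (.inr ∘ .inr)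
    mk_residue fun _ => rfl

theorem compGenus_eq_zero (y : Pushout (capMapL n) (capMapR n)) :
    compGenus (capMapL n) (capMapR n) (fun _ => 0) (fun _ => 0) y = 0 := by
  obtain ⟨i, rfl⟩ := (pushoutEquiv n).symm.surjective y
  have hy (p) : Quot.mk _ p = (pushoutEquiv n).symm i ↔ residue n p = i :=
    mk_eq_mk_iff _ (.inr (.inr i))
  have hA : (Finset.univ.filter fun a => pInl (capMapL n) (capMapR n) a =
      (pushoutEquiv n).symm i) = Finset.univ.filter fun a => Sum.elim id id a = i :=
    Finset.filter_congr fun a _ => hy (.inl a)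
  have hB : (Finset.univ.filter fun b => pInr (capMapL n) (capMapR n) b =
      (pushoutEquiv n).symm i) = Finset.univ.filter fun b => Sum.elim id id b = i :=
    Finset.filter_congr fun b _ => hy (.inr b)
  have hk : (Finset.univ.filter fun z => pInl (capMapL n) (capMapR n) (capMapL n z) =
      (pushoutEquiv n).symm i) =
      Finset.univ.filter fun z => Sum.elim id (Sum.elim id id) z = i :=
    Finset.filter_congr fun z _ => (hy _).trans (by rcases z with z | z | z <;> rfl)
  rw [compGenus_zero, hA, hB, hk, card_filter_sumElim_id_eq,
    card_filter_sumElim_sumElim_id_eq]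
  norm_num

end CupCap

theorem stmt_13_general (n : ℕ) :
    (∀ p q : (Fin n ⊕ Fin n) ⊕ (Fin n ⊕ Fin n),
        (Quot.mk (PRel (capMapL n) (capMapR n)) p =
         Quot.mk (PRel (capMapL n) (capMapR n)) q ↔
          Sum.elim (Sum.elim id id) (Sum.elim id id) p =
          Sum.elim (Sum.elim id id) (Sum.elim id id) q)) ∧
    Nat.card (Pushout (capMapL n) (capMapR n)) = n ∧
    ∀ y : Pushout (capMapL n) (capMapR n),
      compGenus (capMapL n) (capMapR n) (fun _ => (0 : ℤ)) (fun _ => (0 : ℤ)) y = 0 :=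
  ⟨CupCap.mk_eq_mk_iff, by rw [Nat.card_congr (CupCap.pushoutEquiv n), Nat.card_fin],
    CupCap.compGenus_eq_zero⟩

/-- in the cup-cap composite, the pushout identifies elements of
`2n ⊔ 2n` exactly when congruent mod `n`, the pushout has exactly `n` elements,
and the composite genus of each element is `1 − 4 + 3 = 0`. -/
theorem stmt_13 (n : ℕ) (hn : 1 ≤ n) :
    (∀ p q : (Fin n ⊕ Fin n) ⊕ (Fin n ⊕ Fin n),
        (Quot.mk (PRel (capMapL n) (capMapR n)) p =
         Quot.mk (PRel (capMapL n) (capMapR n)) q ↔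
          Sum.elim (Sum.elim id id) (Sum.elim id id) p =
          Sum.elim (Sum.elim id id) (Sum.elim id id) q)) ∧
    Nat.card (Pushout (capMapL n) (capMapR n)) = n ∧
    ∀ y : Pushout (capMapL n) (capMapR n),
      compGenus (capMapL n) (capMapR n) (fun _ => (0 : ℤ)) (fun _ => (0 : ℤ)) y = 0 :=
  stmt_13_general n
end

section
/- Every oriented 1-cobordism induces a bijection m₊ + n₋ → m₋ + n₊: given the structure maps l_m: m → C and l_n: n → C of an oriented 1-cobordism, the pairing that matches each point of m₊ ∪ n₋ with the unique other point of m ∪ n mapping to the same component defines a bijection from m₊ ⊔ n₋ to m₋ ⊔ n₊. -/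
open scoped Classical

/-- every oriented 1-cobordism induces a bijection
`m₊ ⊔ n₋ ≃ m₋ ⊔ n₊`, matching each point with the unique other point mapping to the
same component. -/
theorem stmt_14 {m n C : Type} [Finite m] [Finite n] [Finite C]
    (sm : m → Bool) (sn : n → Bool) (lm : m → C) (ln : n → C)
    (h : IsOriented sm sn lm ln) :
    ∃ e : ({x : m // sm x = true} ⊕ {y : n // sn y = false}) ≃
          ({x : m // sm x = false} ⊕ {y : n // sn y = true}),
      ∀ p, Sum.elim (fun x => lm x.1) (fun y => ln y.1) (e p)
          = Sum.elim (fun x => lm x.1) (fun y => ln y.1) p := by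
  classical
  have A : ∀ p : ({x : m // sm x = true} ⊕ {y : n // sn y = false}),
      ∃! q : ({x : m // sm x = false} ⊕ {y : n // sn y = true}),
        Sum.elim (fun x => lm x.1) (fun y => ln y.1) q
          = Sum.elim (fun x => lm x.1) (fun y => ln y.1) p := by
    rintro (⟨x, hx⟩ | ⟨y, hy⟩)
    · rcases h (lm x) with ⟨a, b, ha, hb, hab, hiff, hno⟩ |
        ⟨a, b, ha, hb, hab, hiff, hno⟩ | ⟨a, b, hs, hifm, hifn⟩ | ⟨h1, h2⟩
      · have hxa : x = a := by
          rcases (hiff x).1 rfl with h' | h'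
          · exact h'
          · subst h'; rw [hx] at hb; exact absurd hb (by simp)
        refine ⟨Sum.inl ⟨b, hb⟩, ?_, ?_⟩
        · simpa using (hiff b).2 (Or.inr rfl)
        · rintro (⟨b', hb'⟩ | ⟨y', hy'⟩) hq
          · simp only [Sum.elim_inl] at hq
            rcases (hiff b').1 hq with h' | h'
            · subst h'; rw [hb'] at ha; exact absurd ha (by simp)
            · subst h'; rfl
          · exact absurd hq (hno y')
      · exact absurd rfl (hno x)
      · have hxa : x = a := (hifm x).1 rfl
        have hsb : sn b = true := by rw [← hs, ← hxa, hx]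
        refine ⟨Sum.inr ⟨b, hsb⟩, ?_, ?_⟩
        · simpa using (hifn b).2 rfl
        · rintro (⟨b', hb'⟩ | ⟨y', hy'⟩) hq
          · simp only [Sum.elim_inl] at hq
            have := (hifm b').1 hq
            subst this; rw [← hxa, hx] at hb'; exact absurd hb' (by simp)
          · simp only [Sum.elim_inr] at hq
            have := (hifn y').1 hq; subst this; rfl
      · exact absurd rfl (h1 x)
    · rcases h (ln y) with ⟨a, b, ha, hb, hab, hiff, hno⟩ |
        ⟨a, b, ha, hb, hab, hiff, hno⟩ | ⟨a, b, hs, hifm, hifn⟩ | ⟨h1, h2⟩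
      · exact absurd rfl (hno y)
      · have hyb : y = b := by
          rcases (hiff y).1 rfl with h' | h'
          · subst h'; rw [hy] at ha; exact absurd ha (by simp)
          · exact h'
        refine ⟨Sum.inr ⟨a, ha⟩, ?_, ?_⟩
        · simpa using (hiff a).2 (Or.inl rfl)
        · rintro (⟨b', hb'⟩ | ⟨y', hy'⟩) hq
          · exact absurd hq (hno b')
          · simp only [Sum.elim_inr] at hq
            rcases (hiff y').1 hq with h' | h'
            · subst h'; rfl
            · subst h'; rw [hy'] at hb; exact absurd hb (by simp)
      · have hyb : y = b := (hifn y).1 rfl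
        have hsa : sm a = false := by rw [hs, ← hyb, hy]
        refine ⟨Sum.inl ⟨a, hsa⟩, ?_, ?_⟩
        · simpa using (hifm a).2 rfl
        · rintro (⟨b', hb'⟩ | ⟨y', hy'⟩) hq
          · simp only [Sum.elim_inl] at hq
            have := (hifm b').1 hq; subst this; rfl
          · simp only [Sum.elim_inr] at hq
            have := (hifn y').1 hq
            subst this; rw [← hyb, hy] at hy'; exact absurd hy' (by simp)
      · exact absurd rfl (h2 y)
  have B : ∀ q : ({x : m // sm x = false} ⊕ {y : n // sn y = true}),
      ∃! p : ({x : m // sm x = true} ⊕ {y : n // sn y = false}),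
        Sum.elim (fun x => lm x.1) (fun y => ln y.1) p
          = Sum.elim (fun x => lm x.1) (fun y => ln y.1) q := by
    rintro (⟨x, hx⟩ | ⟨y, hy⟩)
    · rcases h (lm x) with ⟨a, b, ha, hb, hab, hiff, hno⟩ |
        ⟨a, b, ha, hb, hab, hiff, hno⟩ | ⟨a, b, hs, hifm, hifn⟩ | ⟨h1, h2⟩
      · have hxb : x = b := by
          rcases (hiff x).1 rfl with h' | h'
          · subst h'; rw [hx] at ha; exact absurd ha (by simp)
          · exact h'
        refine ⟨Sum.inl ⟨a, ha⟩, ?_, ?_⟩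
        · simpa using (hiff a).2 (Or.inl rfl)
        · rintro (⟨b', hb'⟩ | ⟨y', hy'⟩) hq
          · simp only [Sum.elim_inl] at hq
            rcases (hiff b').1 hq with h' | h'
            · subst h'; rfl
            · subst h'; rw [hb'] at hb; exact absurd hb (by simp)
          · exact absurd hq (hno y')
      · exact absurd rfl (hno x)
      · have hxa : x = a := (hifm x).1 rfl
        have hsb : sn b = false := by rw [← hs, ← hxa, hx]
        refine ⟨Sum.inr ⟨b, hsb⟩, ?_, ?_⟩
        · simpa using (hifn b).2 rfl
        · rintro (⟨b', hb'⟩ | ⟨y', hy'⟩) hq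
          · simp only [Sum.elim_inl] at hq
            have := (hifm b').1 hq
            subst this; rw [← hxa, hx] at hb'; exact absurd hb' (by simp)
          · simp only [Sum.elim_inr] at hq
            have := (hifn y').1 hq; subst this; rfl
      · exact absurd rfl (h1 x)
    · rcases h (ln y) with ⟨a, b, ha, hb, hab, hiff, hno⟩ |
        ⟨a, b, ha, hb, hab, hiff, hno⟩ | ⟨a, b, hs, hifm, hifn⟩ | ⟨h1, h2⟩
      · exact absurd rfl (hno y)
      · have hya : y = a := by
          rcases (hiff y).1 rfl with h' | h'
          · exact h'
          · subst h'; rw [hy] at hb; exact absurd hb (by simp)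
        refine ⟨Sum.inr ⟨b, hb⟩, ?_, ?_⟩
        · simpa using (hiff b).2 (Or.inr rfl)
        · rintro (⟨b', hb'⟩ | ⟨y', hy'⟩) hq
          · exact absurd hq (hno b')
          · simp only [Sum.elim_inr] at hq
            rcases (hiff y').1 hq with h' | h'
            · subst h'; rw [hy'] at ha; exact absurd ha (by simp)
            · subst h'; rfl
      · have hyb : y = b := (hifn y).1 rfl
        have hsa : sm a = true := by rw [hs, ← hyb, hy]
        refine ⟨Sum.inl ⟨a, hsa⟩, ?_, ?_⟩
        · simpa using (hifm a).2 rfl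
        · rintro (⟨b', hb'⟩ | ⟨y', hy'⟩) hq
          · simp only [Sum.elim_inl] at hq
            have := (hifm b').1 hq; subst this; rfl
          · simp only [Sum.elim_inr] at hq
            have := (hifn y').1 hq
            subst this; rw [← hyb, hy] at hy'; exact absurd hy' (by simp)
      · exact absurd rfl (h2 y)
  choose f hf hf' using A
  choose g hg hg' using B
  refine ⟨⟨f, g, fun p => (hg' (f p) p (hf p).symm).symm,
    fun q => (hf' (g q) q (hg q).symm).symm⟩, fun p => hf p⟩
end

section
/- The functor Φ from oriented 1-Cob to 2-Cob (sending each signed point to a boundary circle, forgetting signs, and assigning genus 0 to every component) is faithful: if the images of two oriented 1-cobordisms from m to n under Φ are equivalent as 2-cobordisms, then the original oriented 1-cobordisms are equivalent in 1-Cob⁺. -/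
/-!
Up to sign-preserving equivalence, an oriented 1-cobordism is determined by the signed profile
of each component, i.e. how many positive and negative points of `m` and of `n` lie on it.
The orientation conditions make every component a cap, a cup, a through-strand of some sign,
or closed, and the unsigned profile, which the given bijection `χ` preserves, tells these
apart except for the sign of a through-strand. The number of through-strands of sign `b` is
the number of points of `m` of sign `b` minus the number of caps, so it is preserved as well.
Hence some bijection of components matches signed profiles, and bijections between the fibers
of signed points assemble into sign-preserving bijections of `m` and `n`.
-/

open scoped Classical

section FiberCounting

variable {α β γ σ : Type*}

theorem exists_equiv_comp_eq_of_card_fiber_eq [Finite α] [Finite β] {f : α → γ} {g : β → γ}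
    (h : ∀ c, Nat.card {a // f a = c} = Nat.card {b // g b = c}) :
    ∃ e : α ≃ β, ∀ a, g (e a) = f a :=
  have e c : {a // f a = c} ≃ {b // g b = c} := (Finite.card_eq.mp (h c)).some
  ⟨Equiv.ofFiberEquiv e, Equiv.ofFiberEquiv_map e⟩

theorem card_subtype_eq_sum_card_fiber [Finite α] [Fintype σ] (P : α → Prop) (s : α → σ) :
    Nat.card {x // P x} = ∑ b, Nat.card {x // P x ∧ s x = b} := by
  rw [← Nat.card_sigma, Nat.card_congr (Equiv.sigmaFiberEquiv fun x : {x // P x} ↦ s x).symm]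
  exact Nat.card_congr
    (Equiv.sigmaCongrRight fun b ↦ Equiv.subtypeSubtypeEquivSubtypeInter P (s · = b))

theorem card_fiber_eq_of_semiconj {γ' : Type*} {f : α → γ} {f' : β → γ'}
    (φ : α ≃ β) (χ : γ ≃ γ') (hχ : ∀ x, χ (f x) = f' (φ x)) (c : γ) :
    Nat.card {y // f' y = χ c} = Nat.card {x // f x = c} :=
  Nat.card_congr (φ.subtypeEquiv fun x ↦ by rw [← hχ, χ.apply_eq_iff_eq]).symm

noncomputable def signedFiberCard (f : α → γ) (s : α → σ) (c : γ) (b : σ) : ℕ :=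
  Nat.card {x // f x = c ∧ s x = b}

theorem exists_equiv_of_signedFiberCard_eq [Finite α] [Finite β] {γ' : Type*}
    {f : α → γ} {s : α → σ} {f' : β → γ'} {s' : β → σ} (χ : γ ≃ γ')
    (h : ∀ c b, signedFiberCard f' s' (χ c) b = signedFiberCard f s c b) :
    ∃ φ : α ≃ β, (∀ x, s' (φ x) = s x) ∧ ∀ x, χ (f x) = f' (φ x) := by
  obtain ⟨φ, hφ⟩ := exists_equiv_comp_eq_of_card_fiber_eq
    (f := fun x ↦ (χ (f x), s x)) (g := fun y ↦ (f' y, s' y)) fun ⟨c', b⟩ ↦ by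
      have := h (χ.symm c') b
      simp only [signedFiberCard, Equiv.apply_symm_apply] at this
      simp only [Prod.mk.injEq, ← χ.eq_symm_apply]
      exact this.symm
  exact ⟨φ, fun x ↦ (Prod.ext_iff.mp (hφ x)).2, fun x ↦ ((Prod.ext_iff.mp (hφ x)).1).symm⟩

end FiberCounting

section SignedFiberCard

variable {α γ σ : Type*} {f : α → γ} {s : α → σ} {c : γ}

theorem signedFiberCard_eq_zero (h : ∀ x, f x ≠ c) : signedFiberCard f s c = 0 := by
  funext b
  have : IsEmpty {x // f x = c ∧ s x = b} := ⟨fun x ↦ h x.1 x.2.1⟩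
  exact Nat.card_of_isEmpty

theorem signedFiberCard_eq_single [DecidableEq σ] {a : α} (h : ∀ x, f x = c ↔ x = a) :
    signedFiberCard f s c = Pi.single (s a) 1 := by
  funext b
  by_cases hb : s a = b
  · rw [hb, Pi.single_eq_same, ← Nat.card_unique (α := {x // x = a})]
    exact Nat.card_congr (Equiv.subtypeEquivRight fun x ↦ by
      rw [h]; exact and_iff_left_of_imp fun hx ↦ hx ▸ hb)
  · rw [Pi.single_eq_of_ne' hb]
    have : IsEmpty {x // f x = c ∧ s x = b} := ⟨fun x ↦ hb (by rw [← (h x.1).mp x.2.1, x.2.2])⟩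
    exact Nat.card_of_isEmpty

theorem signedFiberCard_eq_one {s : α → Bool} {a a' : α} (h : ∀ x, f x = c ↔ x = a ∨ x = a')
    (ha : s a = true) (ha' : s a' = false) : signedFiberCard f s c = 1 := by
  funext b
  have hb : ∀ x, f x = c ∧ s x = b ↔ x = if b then a else a' := by
    intro x; rw [h]; cases b <;> aesop
  rw [Pi.one_apply, ← Nat.card_unique (α := {x // x = if b then a else a'})]
  exact Nat.card_congr (Equiv.subtypeEquivRight hb)

end SignedFiberCard

section Profile

variable {m n C : Type} (sm : m → Bool) (sn : n → Bool) (lm : m → C) (ln : n → C)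

noncomputable def signedProfile (c : C) : (Bool → ℕ) × (Bool → ℕ) :=
  (signedFiberCard lm sm c, signedFiberCard ln sn c)

def throughProfile (b : Bool) : (Bool → ℕ) × (Bool → ℕ) :=
  (Pi.single b 1, Pi.single b 1)

/-- The profiles of a cap, a cup, a through-strand of sign `b`, and a closed component. -/
def IsComponentProfile (q : (Bool → ℕ) × (Bool → ℕ)) : Prop :=
  q = (1, 0) ∨ q = (0, 1) ∨ (∃ b, q = throughProfile b) ∨ q = 0

def profileTotal (q : (Bool → ℕ) × (Bool → ℕ)) : ℕ × ℕ :=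
  (∑ b, q.1 b, ∑ b, q.2 b)

theorem profileTotal_signedProfile [Finite m] [Finite n] (c : C) :
    profileTotal (signedProfile sm sn lm ln c) =
      (Nat.card {x // lm x = c}, Nat.card {y // ln y = c}) := by
  rw [card_subtype_eq_sum_card_fiber _ sm, card_subtype_eq_sum_card_fiber _ sn]
  rfl

theorem throughProfile_ne_cap (b : Bool) : throughProfile b ≠ (1, 0) := by
  cases b <;> simp [throughProfile, funext_iff, Prod.ext_iff]

variable {sm sn lm ln}

theorem IsOriented.isComponentProfile (h : IsOriented sm sn lm ln) (c : C) :
    IsComponentProfile (signedProfile sm sn lm ln c) := by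
  rcases h c with ⟨a, a', ha, ha', -, hm, hn⟩ | ⟨a, a', ha, ha', -, hn, hm⟩ |
    ⟨a, b, hs, hm, hn⟩ | ⟨hm, hn⟩
  · exact .inl (Prod.ext (signedFiberCard_eq_one hm ha ha') (signedFiberCard_eq_zero hn))
  · exact .inr <| .inl (Prod.ext (signedFiberCard_eq_zero hm) (signedFiberCard_eq_one hn ha ha'))
  · refine .inr <| .inr <| .inl ⟨sm a, Prod.ext (signedFiberCard_eq_single hm) ?_⟩
    exact (signedFiberCard_eq_single hn).trans (congrArg (Pi.single · 1) hs.symm)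
  · exact .inr <| .inr <| .inr (Prod.ext (signedFiberCard_eq_zero hm) (signedFiberCard_eq_zero hn))

theorem IsComponentProfile.eq_or_through {q q' : (Bool → ℕ) × (Bool → ℕ)}
    (hq : IsComponentProfile q) (hq' : IsComponentProfile q')
    (htot : profileTotal q = profileTotal q') :
    q = q' ∨ (∃ b, q = throughProfile b) ∧ ∃ b, q' = throughProfile b := by
  rcases hq with rfl | rfl | ⟨⟨⟩, rfl⟩ | rfl <;> rcases hq' with rfl | rfl | ⟨⟨⟩, rfl⟩ | rfl <;>
    first
    | exact .inl rfl
    | exact .inr ⟨⟨_, rfl⟩, _, rfl⟩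
    | simp [profileTotal, throughProfile] at htot

end Profile

section Counting

variable {m n C : Type} {sm : m → Bool} {sn : n → Bool} {lm : m → C} {ln : n → C}

theorem IsOriented.signedFiberCard_eq_ite (h : IsOriented sm sn lm ln) (c : C) (b : Bool) :
    signedFiberCard lm sm c b =
      (if signedProfile sm sn lm ln c = (1, 0) then 1 else 0) +
        if signedProfile sm sn lm ln c = throughProfile b then 1 else 0 := by
  change (signedProfile sm sn lm ln c).1 b = _
  rcases h.isComponentProfile c with hc | hc | ⟨b', hc⟩ | hc <;> rw [hc] <;> cases b <;>
    (try cases b') <;> simp [throughProfile, funext_iff, Prod.ext_iff]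

theorem IsOriented.card_cap_add_card_through [Finite m] [Finite C]
    (h : IsOriented sm sn lm ln) (b : Bool) :
    Nat.card {c // signedProfile sm sn lm ln c = (1, 0)} +
      Nat.card {c // signedProfile sm sn lm ln c = throughProfile b} =
        Nat.card {x // sm x = b} := by
  have := Fintype.ofFinite C
  calc _ = ∑ c, signedFiberCard lm sm c b := by
        simp only [h.signedFiberCard_eq_ite, Finset.sum_add_distrib, Finset.sum_boole,
          Nat.card_eq_fintype_card, Fintype.card_subtype, Nat.cast_id]
    _ = Nat.card {x // sm x = b} := by
        rw [card_subtype_eq_sum_card_fiber _ lm]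
        simp only [signedFiberCard, and_comm]

end Counting

section Comparison

variable {m n C C' : Type} {sm : m → Bool} {sn : n → Bool}
  {lm : m → C} {ln : n → C} {lm' : m → C'} {ln' : n → C'}

theorem card_signedProfile_eq [Finite m] [Finite C] [Finite C']
    (h1 : IsOriented sm sn lm ln) (h2 : IsOriented sm sn lm' ln') (χ : C ≃ C')
    (hχ : ∀ c, profileTotal (signedProfile sm sn lm' ln' (χ c)) =
      profileTotal (signedProfile sm sn lm ln c))
    (q : (Bool → ℕ) × (Bool → ℕ)) :
    Nat.card {c // signedProfile sm sn lm ln c = q} =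
      Nat.card {c' // signedProfile sm sn lm' ln' c' = q} := by
  have of_not_through (q) (hq : ¬ ∃ b, q = throughProfile b) :
      Nat.card {c // signedProfile sm sn lm ln c = q} =
        Nat.card {c' // signedProfile sm sn lm' ln' c' = q} := by
    refine Nat.card_congr (χ.subtypeEquiv fun c ↦ ?_)
    rcases (h1.isComponentProfile c).eq_or_through (h2.isComponentProfile (χ c)) (hχ c).symm with
      heq | ⟨⟨b, hb⟩, b', hb'⟩
    · rw [heq]
    · rw [hb, hb']
      exact ⟨fun h ↦ (hq ⟨b, h.symm⟩).elim, fun h ↦ (hq ⟨b', h.symm⟩).elim⟩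
  by_cases hq : ∃ b, q = throughProfile b
  · obtain ⟨b, rfl⟩ := hq
    have hcap := of_not_through (1, 0) fun ⟨b, hb⟩ ↦ throughProfile_ne_cap b hb.symm
    have := h1.card_cap_add_card_through b
    have := h2.card_cap_add_card_through b
    omega
  · exact of_not_through q hq

end Comparison

/-- Lemma 5.4.1: the functor `Φ : 1-Cob⁺ → 2-Cob` is faithful: if the
images of two oriented 1-cobordisms (genus-0 2-cobordisms obtained by forgetting the
signs) are equivalent as 2-cobordisms, then the oriented 1-cobordisms are equivalent
via sign-preserving bijections. -/
theorem stmt_15 {m n C C' : Type} [Finite m] [Finite n] [Finite C] [Finite C']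
    (sm : m → Bool) (sn : n → Bool)
    (lm : m → C) (ln : n → C) (lm' : m → C') (ln' : n → C')
    (h1 : IsOriented sm sn lm ln) (h2 : IsOriented sm sn lm' ln')
    (h : ∃ (φ : m ≃ m) (ψ : n ≃ n) (χ : C ≃ C'),
          (∀ x, χ (lm x) = lm' (φ x)) ∧ (∀ y, χ (ln y) = ln' (ψ y))) :
    ∃ (φ : m ≃ m) (ψ : n ≃ n) (χ : C ≃ C'),
      (∀ x, sm (φ x) = sm x) ∧ (∀ y, sn (ψ y) = sn y) ∧
      (∀ x, χ (lm x) = lm' (φ x)) ∧ (∀ y, χ (ln y) = ln' (ψ y)) := by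
  obtain ⟨φ, ψ, χ, hφ, hψ⟩ := h
  have hχ (c : C) : profileTotal (signedProfile sm sn lm' ln' (χ c)) =
      profileTotal (signedProfile sm sn lm ln c) := by
    rw [profileTotal_signedProfile, profileTotal_signedProfile,
      card_fiber_eq_of_semiconj φ χ hφ, card_fiber_eq_of_semiconj ψ χ hψ]
  obtain ⟨χ', hχ'⟩ := exists_equiv_comp_eq_of_card_fiber_eq (card_signedProfile_eq h1 h2 χ hχ)
  obtain ⟨φ', hφs, hφ'⟩ :=
    exists_equiv_of_signedFiberCard_eq χ' fun c ↦ congrFun (congrArg Prod.fst (hχ' c))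
  obtain ⟨ψ', hψs, hψ'⟩ :=
    exists_equiv_of_signedFiberCard_eq χ' fun c ↦ congrFun (congrArg Prod.snd (hχ' c))
  exact ⟨φ', ψ', χ', hφs, hψs, hφ', hψ'⟩
end

section
/- The image under Φ of any oriented 1-cobordism factors in 2-Cob as a cofibration followed by a fibration, both of which are again in the image of Φ: the intermediate set k = im(l_m) ∩ im(l_n) can be given signs, and the two factor cobordisms (with genus functions identically zero) satisfy the local conditions defining oriented 1-cobordisms. -/
open scoped Classical

/-!
Factor through `A = im l_m ∪ (C ∖ im l_n)` and `B = im l_n`, glued along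
`k = A ∩ B = im l_m ∩ im l_n`. Since `A ∪ B = C`, the pushout `A ⊔_k B` is `C` itself, and the
genus formula with zero genera vanishes by inclusion–exclusion: it reads `1 - 1` at a component
lying in only one of `A`, `B`, and `1 - 2 + 1` at one lying in both. A component of `k` lies in the images of both `l_m`
and `l_n`, so the third local condition applies to it: it has exactly one preimage on each
side, of equal signs. Every other component keeps the local picture it had in `C`.
-/

open Set

section InclusionPushout

variable {C : Type} {K S T : Set C} (hKS : K ⊆ S) (hKT : K ⊆ T)

noncomputable def Pushout.toAmbient : Pushout (inclusion hKS) (inclusion hKT) → C :=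
  Quot.lift (Sum.elim Subtype.val Subtype.val) (by rintro _ _ ⟨z, rfl, rfl⟩; rfl)

theorem Pushout.toAmbient_injective (hK : S ∩ T ⊆ K) :
    Function.Injective (Pushout.toAmbient hKS hKT) := by
  have glue : ∀ (a : S) (b : T), (a : C) = b →
      pInl (inclusion hKS) (inclusion hKT) a = pInr _ _ b := by
    rintro ⟨c, hS⟩ ⟨_, hT⟩ rfl
    exact Quot.sound ⟨⟨c, hK ⟨hS, hT⟩⟩, rfl, rfl⟩
  rintro ⟨a | b⟩ ⟨a' | b'⟩ h
  · exact congrArg (pInl _ _) (Subtype.ext h)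
  · exact glue a b' h
  · exact (glue a' b h.symm).symm
  · exact congrArg (pInr _ _) (Subtype.ext h)

theorem Pushout.toAmbient_surjective (hST : ∀ c, c ∈ S ∨ c ∈ T) :
    Function.Surjective (Pushout.toAmbient hKS hKT) := fun c =>
  (hST c).elim (fun hS => ⟨pInl _ _ ⟨c, hS⟩, rfl⟩) fun hT => ⟨pInr _ _ ⟨c, hT⟩, rfl⟩

theorem Pushout.toAmbient_mem (x : Pushout (inclusion hKS) (inclusion hKT)) :
    toAmbient hKS hKT x ∈ S ∨ toAmbient hKS hKT x ∈ T := by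
  rcases x with ⟨a | b⟩
  exacts [Or.inl a.2, Or.inr b.2]

theorem card_filter_eq_ite {U : Set C} [Fintype U] {p : U → Prop} [DecidablePred p] {c : C}
    (hp : ∀ a, p a ↔ (a : C) = c) :
    (Finset.univ.filter p).card = if c ∈ U then 1 else 0 := by
  split_ifs with hc
  · rw [Finset.card_eq_one]
    exact ⟨⟨c, hc⟩, by ext; simp [hp, Subtype.ext_iff]⟩
  · rw [Finset.card_eq_zero, Finset.filter_eq_empty_iff]
    exact fun a _ ha => hc ((hp a).1 ha ▸ a.2)

theorem compGenus_inclusion_eq_zero [Fintype K] [Fintype S] [Fintype T] (hK : S ∩ T ⊆ K)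
    (x : Pushout (inclusion hKS) (inclusion hKT)) :
    compGenus (inclusion hKS) (inclusion hKT) (fun _ => 0) (fun _ => 0) x = 0 := by
  set c := Pushout.toAmbient hKS hKT x
  have eq_iff : ∀ y, y = x ↔ Pushout.toAmbient hKS hKT y = c :=
    fun y => (Pushout.toAmbient_injective hKS hKT hK).eq_iff.symm
  have hS : ∀ a : S, pInl (inclusion hKS) (inclusion hKT) a = x ↔ (a : C) = c :=
    fun a => eq_iff _
  have hT : ∀ b : T, pInr (inclusion hKS) (inclusion hKT) b = x ↔ (b : C) = c :=
    fun b => eq_iff _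
  have hK' : ∀ z : K,
      pInl (inclusion hKS) (inclusion hKT) (inclusion hKS z) = x ↔ (z : C) = c :=
    fun z => eq_iff _
  simp only [compGenus, Finset.sum_const]
  rw [card_filter_eq_ite hS, card_filter_eq_ite hT, card_filter_eq_ite hK']
  have hc : c ∈ S ∨ c ∈ T := Pushout.toAmbient_mem hKS hKT x
  have hcK : c ∈ K ↔ c ∈ S ∧ c ∈ T := ⟨fun h => ⟨hKS h, hKT h⟩, fun h => hK h⟩
  by_cases hcS : c ∈ S <;> by_cases hcT : c ∈ T <;> simp_all

end InclusionPushout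

section Factorization

variable {m n C : Type} {sm : m → Bool} {sn : n → Bool} {lm : m → C} {ln : n → C}

theorem IsOriented.exists_sign_eq_of_mem_inter (h : IsOriented sm sn lm ln) {c : C}
    (hc : c ∈ range lm ∩ range ln) :
    ∃ a b, sm a = sn b ∧ (∀ x, lm x = c ↔ x = a) ∧ (∀ y, ln y = c ↔ y = b) := by
  obtain ⟨⟨x, hx⟩, ⟨y, hy⟩⟩ := hc
  rcases h c with ⟨-, -, -, -, -, -, hn⟩ | ⟨-, -, -, -, -, -, hm⟩ | hab | ⟨hm, -⟩
  exacts [absurd hy (hn y), absurd hx (hm x), hab, absurd hx (hm x)]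

theorem IsOriented.of_notMem_range_right (h : IsOriented sm sn lm ln) {c : C}
    (hc : c ∉ range ln) :
    (∃ a b, sm a = true ∧ sm b = false ∧ a ≠ b ∧ ∀ x, lm x = c ↔ x = a ∨ x = b) ∨
      ∀ x, lm x ≠ c := by
  rcases h c with ⟨a, b, ha, hb, hab, hm, -⟩ | ⟨a, _, -, -, -, hn, -⟩ | ⟨_, b, -, -, hn⟩ |
    ⟨hm, -⟩
  · exact Or.inl ⟨a, b, ha, hb, hab, hm⟩
  · exact absurd ⟨a, (hn a).2 (Or.inl rfl)⟩ hc
  · exact absurd ⟨b, (hn b).2 rfl⟩ hc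
  · exact Or.inr hm

theorem IsOriented.of_notMem_range_left (h : IsOriented sm sn lm ln) {c : C}
    (hc : c ∉ range lm) :
    (∃ a b, sn a = true ∧ sn b = false ∧ a ≠ b ∧ ∀ y, ln y = c ↔ y = a ∨ y = b) ∨
      ∀ y, ln y ≠ c := by
  rcases h c with ⟨a, _, -, -, -, hm, -⟩ | ⟨a, b, ha, hb, hab, hn, -⟩ | ⟨a, _, -, hm, -⟩ |
    ⟨-, hn⟩
  · exact absurd ⟨a, (hm a).2 (Or.inl rfl)⟩ hc
  · exact Or.inl ⟨a, b, ha, hb, hab, hn⟩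
  · exact absurd ⟨a, (hm a).2 rfl⟩ hc
  · exact Or.inr hn

variable (sm lm ln)

noncomputable def interSign (z : ↥(range lm ∩ range ln)) : Bool :=
  sm (rangeSplitting lm ⟨z, z.2.1⟩)

theorem interSign_eq_of_forall_iff {z : ↥(range lm ∩ range ln)} {a : m}
    (ha : ∀ x, lm x = z ↔ x = a) : interSign sm lm ln z = sm a :=
  congrArg sm ((ha _).1 (apply_rangeSplitting lm _))

variable [Fintype C]

noncomputable def cofibFactor : Cob m ↥(range lm ∩ range ln) where
  C := ↥(range lm ∪ (range ln)ᶜ)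
  lm x := ⟨lm x, Or.inl (mem_range_self x)⟩
  ln := inclusion (inter_subset_left.trans subset_union_left)
  g _ := 0

noncomputable def fibFactor : Cob ↥(range lm ∩ range ln) n where
  C := range ln
  lm := inclusion inter_subset_right
  ln := rangeFactorization ln
  g _ := 0

theorem cofibFactor_isCofib : (cofibFactor lm ln).IsCofib :=
  ⟨inclusion_injective (inter_subset_left.trans subset_union_left),
    fun z => rangeSplitting lm ⟨z, z.2.1⟩,
    fun z => Subtype.ext (apply_rangeSplitting lm ⟨z, z.2.1⟩)⟩

theorem fibFactor_isFib : (fibFactor lm ln).IsFib :=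
  ⟨inclusion_injective inter_subset_right, rangeFactorization_surjective, fun _ => rfl⟩

variable {sm lm ln}

theorem isOriented_cofibFactor (h : IsOriented sm sn lm ln) :
    IsOriented sm (interSign sm lm ln) (cofibFactor lm ln).lm (cofibFactor lm ln).ln := by
  rintro ⟨c, hc⟩
  by_cases hT : c ∈ range ln
  · have hcK : c ∈ range lm ∩ range ln := ⟨hc.resolve_right (· hT), hT⟩
    obtain ⟨a, -, -, hm, -⟩ := h.exists_sign_eq_of_mem_inter hcK
    exact Or.inr <| Or.inr <| Or.inl ⟨a, ⟨c, hcK⟩,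
      (interSign_eq_of_forall_iff sm lm ln hm).symm,
      fun x => Subtype.ext_iff.trans (hm x),
      fun z => Subtype.ext_iff.trans (Subtype.ext_iff (a1 := z) (a2 := ⟨c, hcK⟩)).symm⟩
  · have hk : ∀ z, (cofibFactor lm ln).ln z ≠ ⟨c, hc⟩ := fun z hz => by
      obtain rfl : (z : C) = c := congrArg Subtype.val hz
      exact hT z.2.2
    rcases h.of_notMem_range_right hT with ⟨a, b, ha, hb, hab, hm⟩ | hm
    · exact Or.inl ⟨a, b, ha, hb, hab, fun x => Subtype.ext_iff.trans (hm x), hk⟩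
    · exact Or.inr <| Or.inr <| Or.inr ⟨fun x hx => hm x (congrArg Subtype.val hx), hk⟩

theorem isOriented_fibFactor (h : IsOriented sm sn lm ln) :
    IsOriented (interSign sm lm ln) sn (fibFactor lm ln).lm (fibFactor lm ln).ln := by
  rintro ⟨c, hT⟩
  by_cases hS : c ∈ range lm
  · obtain ⟨a, b, hab, hm, hn⟩ := h.exists_sign_eq_of_mem_inter ⟨hS, hT⟩
    exact Or.inr <| Or.inr <| Or.inl ⟨⟨c, hS, hT⟩, b,
      (interSign_eq_of_forall_iff sm lm ln hm).trans hab,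
      fun z => Subtype.ext_iff.trans (Subtype.ext_iff (a1 := z) (a2 := ⟨c, hS, hT⟩)).symm,
      fun y => Subtype.ext_iff.trans (hn y)⟩
  · have hk : ∀ z, (fibFactor lm ln).lm z ≠ ⟨c, hT⟩ := fun z hz => by
      obtain rfl : (z : C) = c := congrArg Subtype.val hz
      exact hS z.2.1
    rcases h.of_notMem_range_left hS with ⟨a, b, ha, hb, hab, hn⟩ | hn
    · exact Or.inr <| Or.inl ⟨a, b, ha, hb, hab, fun y => Subtype.ext_iff.trans (hn y), hk⟩
    · obtain ⟨y, hy⟩ := hT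
      exact absurd hy (hn y)

variable (lm ln)

theorem fibFactor_comp_cofibFactor_equiv :
    Cob.Equiv ((fibFactor lm ln).comp (cofibFactor lm ln))
      { C := C, lm := lm, ln := ln, g := fun _ => 0 } := by
  have hKS : range lm ∩ range ln ⊆ range lm ∪ (range ln)ᶜ :=
    inter_subset_left.trans subset_union_left
  have hK : (range lm ∪ (range ln)ᶜ) ∩ range ln ⊆ range lm ∩ range ln :=
    fun c ⟨hS, hT⟩ => ⟨hS.resolve_right (· hT), hT⟩
  have hST : ∀ c, c ∈ range lm ∪ (range ln)ᶜ ∨ c ∈ range ln :=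
    fun _ => or_iff_not_imp_right.2 Or.inr
  refine ⟨Equiv.ofBijective _ ⟨Pushout.toAmbient_injective hKS inter_subset_right hK,
    Pushout.toAmbient_surjective hKS inter_subset_right hST⟩, fun _ => rfl, fun _ => rfl,
    fun x => ?_⟩
  exact congrArg Int.toNat (compGenus_inclusion_eq_zero hKS inter_subset_right hK x).symm

end Factorization

theorem stmt_16_general {m n C : Type} [Fintype C]
    (sm : m → Bool) (sn : n → Bool) (lm : m → C) (ln : n → C)
    (h : IsOriented sm sn lm ln) :
    ∃ (k : Type) (fk : Fintype k) (sk : k → Bool) (e : Cob m k) (f : Cob k n),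
      e.IsCofib ∧ f.IsFib ∧
      (∀ a, e.g a = 0) ∧ (∀ b, f.g b = 0) ∧
      IsOriented sm sk e.lm e.ln ∧ IsOriented sk sn f.lm f.ln ∧
      Nonempty (k ≃ {c : C // (∃ x, lm x = c) ∧ ∃ y, ln y = c}) ∧
      Cob.Equiv (@Cob.comp m k n fk f e)
        ({ C := C, lm := lm, ln := ln, g := fun _ => 0 } : Cob m n) :=
  ⟨_, inferInstance, interSign sm lm ln, cofibFactor lm ln, fibFactor lm ln,
    cofibFactor_isCofib lm ln, fibFactor_isFib lm ln, fun _ => rfl, fun _ => rfl,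
    isOriented_cofibFactor h, isOriented_fibFactor h, ⟨Equiv.refl _⟩,
    fibFactor_comp_cofibFactor_equiv lm ln⟩

/-- Proposition 5.4.6: the image under `Φ` of any oriented 1-cobordism
factors in 2-Cob as a cofibration followed by a fibration, both again in the image of
`Φ`: the intermediate set `k = im(l_m) ∩ im(l_n)` can be signed, both genus functions
vanish identically, and both factors satisfy the local conditions of oriented
1-cobordisms. -/
theorem stmt_16 {m n C : Type} [Fintype m] [Fintype n] [Fintype C]
    (sm : m → Bool) (sn : n → Bool) (lm : m → C) (ln : n → C)
    (h : IsOriented sm sn lm ln) :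
    ∃ (k : Type) (fk : Fintype k) (sk : k → Bool) (e : Cob m k) (f : Cob k n),
      e.IsCofib ∧ f.IsFib ∧
      (∀ a, e.g a = 0) ∧ (∀ b, f.g b = 0) ∧
      IsOriented sm sk e.lm e.ln ∧ IsOriented sk sn f.lm f.ln ∧
      Nonempty (k ≃ {c : C // (∃ x, lm x = c) ∧ ∃ y, ln y = c}) ∧
      Cob.Equiv (@Cob.comp m k n fk f e)
        ({ C := C, lm := lm, ln := ln, g := fun _ => 0 } : Cob m n) :=
  stmt_16_general sm sn lm ln h
end
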